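/- arXiv:2205.10446 — 9 statements merged into one kernel-verified Lean document; each statement's English description precedes it below -/
import Mathlib

section
/- Let γ: C → D and δ: D → E be functors, with γ frank. Let a,b be objects of C. If γ fulfills (P) at a (i.e., at the pair a,b' for every object b' of C) and δ fulfills (P) at the pair γ(a),γ(b), then the composite functor δ∘γ fulfills (P) at the pair a,b. -/
open CategoryTheory

universe v u v₂ u₂ v₃ u₃

/-- A functor `δ` with domain `C` fulfills (P) at the pair `a, b`. -/
def FulfillsP {C : Type u} [Category.{v} C] {D : Type u₂} [Category.{v₂} D]
    (δ : C ⥤ D) (a b : C) : Prop :=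
  ∀ r : ℕ, ∃ c : C, ∀ χ : (a ⟶ c) → Fin r, ∃ g : b ⟶ c,
    ∀ f₁ f₂ : a ⟶ b, δ.map f₁ = δ.map f₂ → χ (f₁ ≫ g) = χ (f₂ ≫ g)

/-- A functor `δ : C ⥤ D` is frank. -/
def Frank {C : Type u} [Category.{v} C] {D : Type u₂} [Category.{v₂} D] (δ : C ⥤ D) : Prop :=
  ∀ (a : C) (b' : D), ∃ b : C, δ.obj b = b' ∧
    ∀ g' : δ.obj a ⟶ δ.obj b, ∃ f : a ⟶ b, δ.map f = g'

/-- If `γ` is frank and fulfills (P) at `a` (i.e. at `a, b'` for every `b'`), and `δ`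
fulfills (P) at `γ(a), γ(b)`, then `δ ∘ γ` fulfills (P) at `a, b`. -/
theorem fulfillsP_comp {C : Type u} [Category.{v} C] {D : Type u₂} [Category.{v₂} D]
    {E : Type u₃} [Category.{v₃} E] (γ : C ⥤ D) (δ : D ⥤ E) (a b : C)
    (hfrank : Frank γ)
    (hγ : ∀ b' : C, FulfillsP γ a b')
    (hδ : FulfillsP δ (γ.obj a) (γ.obj b)) :
    FulfillsP (γ ⋙ δ) a b := by
  intro r
  classical
  obtain ⟨c', hδprop⟩ := hδ (r + 1)
  obtain ⟨c₀, hobj, hsurj⟩ := hfrank b c'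
  subst hobj
  obtain ⟨c, hγprop⟩ := hγ c₀ (r + 1)
  refine ⟨c, fun χ => ?_⟩
  set χc : (a ⟶ c) → Fin (r + 1) := fun f => (χ f).castSucc with hχc
  obtain ⟨g, hg⟩ := hγprop χc
  set χ' : (γ.obj a ⟶ γ.obj c₀) → Fin (r + 1) := fun h =>
    if hh : ∃ f : a ⟶ c₀, γ.map f = h then χc (hh.choose ≫ g) else Fin.last r with hχ'
  obtain ⟨g', hg'⟩ := hδprop χ'
  obtain ⟨gb, hgb⟩ := hsurj g'
  refine ⟨gb ≫ g, fun f₁ f₂ hf => ?_⟩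
  have key : ∀ e : a ⟶ c₀, χ' (γ.map e) = χc (e ≫ g) := by
    intro e
    have he : ∃ f : a ⟶ c₀, γ.map f = γ.map e := ⟨e, rfl⟩
    rw [hχ']
    simp only [dif_pos he]
    exact hg _ _ he.choose_spec
  have h1 : χ' (γ.map f₁ ≫ g') = χ' (γ.map f₂ ≫ g') := hg' _ _ hf
  rw [← hgb, ← γ.map_comp, ← γ.map_comp, key, key] at h1
  have h2 : χ ((f₁ ≫ gb) ≫ g) = χ ((f₂ ≫ gb) ≫ g) :=
    Fin.castSucc_injective _ h1
  simpa [Category.assoc] using h2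
end

section
/- Let C, D be categories, a,b∈ob(C) and d₁,d₂∈ob(D). If the pair a,b is R-modeled by d₁,d₂, then rd(a,b) ≤ rd(d₁,d₂). -/
open CategoryTheory

universe v u v₂ u₂

/-- Objects `c₁, c₂, c₃` of `C` and `d₁, d₂, d₃` of `D` are cross-related: there are
`φ : hom(c₁,c₂) × hom(d₂,d₃) → hom(d₁,d₂)`, `ψ : hom(d₂,d₃) → hom(c₂,c₃)`, and
`ζ : hom(d₁,d₃) → hom(c₁,c₃)` with `ζ(g · φ(f,g)) = ψ(g) · f` for all `(f,g)`. -/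
def CrossRelated {C : Type u} [Category.{v} C] {D : Type u₂} [Category.{v₂} D]
    (c₁ c₂ c₃ : C) (d₁ d₂ d₃ : D) : Prop :=
  ∃ (φ : (c₁ ⟶ c₂) → (d₂ ⟶ d₃) → (d₁ ⟶ d₂)) (ψ : (d₂ ⟶ d₃) → (c₂ ⟶ c₃))
    (ζ : (d₁ ⟶ d₃) → (c₁ ⟶ c₃)),
    ∀ (f : c₁ ⟶ c₂) (g : d₂ ⟶ d₃), ζ (φ f g ≫ g) = f ≫ ψ g

/-- The pair `c₁, c₂` is R-modeled by `d₁, d₂`: for each `d₃` there is `c₃` such that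
`c₁, c₂, c₃` and `d₁, d₂, d₃` are cross-related. -/
def RModeledBy {C : Type u} [Category.{v} C] {D : Type u₂} [Category.{v₂} D]
    (c₁ c₂ : C) (d₁ d₂ : D) : Prop :=
  ∀ d₃ : D, ∃ c₃ : C, CrossRelated c₁ c₂ c₃ d₁ d₂ d₃

/-- `RamseyDegLE a b k`: the Ramsey degree of the pair `a, b` is at most `k`. -/
def RamseyDegLE {C : Type u} [Category.{v} C] (a b : C) (k : ℕ∞) : Prop :=
  ∀ r : ℕ, ∃ c : C, ∀ χ : (a ⟶ c) → Fin r, ∃ g : b ⟶ c,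
    (Set.range fun f : a ⟶ b => χ (f ≫ g)).encard ≤ k

/-- The Ramsey degree of the pair `a, b`. -/
noncomputable def ramseyDeg {C : Type u} [Category.{v} C] (a b : C) : ℕ∞ :=
  sInf {k : ℕ∞ | RamseyDegLE a b k}

/-- If `a, b` is R-modeled by `d₁, d₂` then `rd(a,b) ≤ rd(d₁,d₂)`. -/
theorem ramseyDeg_le_of_rModeledBy {C : Type u} [Category.{v} C] {D : Type u₂} [Category.{v₂} D]
    (a b : C) (d₁ d₂ : D) (h : RModeledBy a b d₁ d₂) :
    ramseyDeg a b ≤ ramseyDeg d₁ d₂ := by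
  apply sInf_le_sInf
  intro k hk
  intro r
  obtain ⟨d₃, hd₃⟩ := hk r
  obtain ⟨c₃, φ, ψ, ζ, hζ⟩ := h d₃
  refine ⟨c₃, fun χ => ?_⟩
  obtain ⟨g, hg⟩ := hd₃ (fun h' => χ (ζ h'))
  refine ⟨ψ g, le_trans (Set.encard_mono ?_) hg⟩
  rintro x ⟨f, rfl⟩
  exact ⟨φ f g, by simp [hζ]⟩
end

section
/- Let δ: C → D be a functor and a∈ob(C). If δ fulfills (FP) at a (i.e., at a,b for all objects b), then δ fulfills (P) at a,b for each object b of C such that δ(hom(a,b)) is finite. -/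
open CategoryTheory

universe v u v₂ u₂

/-- A functor `δ` with domain `C` fulfills (FP) at the pair `a, b`: for every `r ∈ ℕ` and
every finite non-empty `s ⊆ δ(hom(a,b))` there exist `c`, `f' ∈ s`, `g' ∈ δ(hom(b,c))`
such that for each `r`-coloring `χ` of `hom(a,c)` there is `g ∈ hom(b,c)` with
`χ` constant on `g · hom(a,b)_{f'}` and `(δg) · e = g' · e` for all `e ∈ s`. -/
def FulfillsFP {C : Type u} [Category.{v} C] {D : Type u₂} [Category.{v₂} D]
    (δ : C ⥤ D) (a b : C) : Prop :=
  ∀ (r : ℕ) (s : Set (δ.obj a ⟶ δ.obj b)), s.Finite → s.Nonempty →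
    s ⊆ Set.range (fun f : a ⟶ b => δ.map f) →
    ∃ (c : C) (f' : δ.obj a ⟶ δ.obj b) (g' : δ.obj b ⟶ δ.obj c),
      f' ∈ s ∧ (∃ h : b ⟶ c, δ.map h = g') ∧
      ∀ χ : (a ⟶ c) → Fin r, ∃ g : b ⟶ c,
        (∀ f₁ f₂ : a ⟶ b, δ.map f₁ = f' → δ.map f₂ = f' → χ (f₁ ≫ g) = χ (f₂ ≫ g)) ∧
        (∀ e ∈ s, e ≫ δ.map g = e ≫ g')

lemma key_lemma {C : Type u} [Category.{v} C] {D : Type u₂} [Category.{v₂} D]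
    (δ : C ⥤ D) (a : C) (hFP : ∀ b : C, FulfillsFP δ a b) (r : ℕ) :
    ∀ n : ℕ, ∀ x : C, ∀ s : Set (δ.obj a ⟶ δ.obj x), s.Finite → s.ncard ≤ n →
      s ⊆ Set.range (fun f : a ⟶ x => δ.map f) →
      ∃ c : C, Nonempty (x ⟶ c) ∧ ∀ χ : (a ⟶ c) → Fin r, ∃ g : x ⟶ c,
        ∀ f₁ f₂ : a ⟶ x, δ.map f₁ ∈ s → δ.map f₁ = δ.map f₂ →
          χ (f₁ ≫ g) = χ (f₂ ≫ g) := by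
  intro n
  induction n with
  | zero =>
    intro x s hs hcard _
    have hse : s = ∅ := by
      rw [← Set.ncard_eq_zero hs]; omega
    refine ⟨x, ⟨𝟙 x⟩, fun χ => ⟨𝟙 x, fun f₁ f₂ hmem _ => ?_⟩⟩
    simp [hse] at hmem
  | succ n ih =>
    intro x s hs hcard hsub
    rcases Set.eq_empty_or_nonempty s with hse | hne
    · refine ⟨x, ⟨𝟙 x⟩, fun χ => ⟨𝟙 x, fun f₁ f₂ hmem _ => ?_⟩⟩
      simp [hse] at hmem
    obtain ⟨c₁, f', g', hf's, ⟨h₁, hδh₁⟩, hprop⟩ := hFP x r s hs hne hsub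
    set s₁ : Set (δ.obj a ⟶ δ.obj c₁) := (fun e => e ≫ g') '' (s \ {f'}) with hs₁def
    have hs₁fin : s₁.Finite := ((hs.subset Set.diff_subset).image _)
    have hs₁card : s₁.ncard ≤ n := by
      have h1 : s₁.ncard ≤ (s \ {f'}).ncard :=
        Set.ncard_image_le (hs.subset Set.diff_subset)
      have h2 : (s \ {f'}).ncard < s.ncard :=
        Set.ncard_diff_singleton_lt_of_mem hf's hs
      omega
    have hs₁sub : s₁ ⊆ Set.range (fun f : a ⟶ c₁ => δ.map f) := by
      rintro e' ⟨e, ⟨hes, -⟩, rfl⟩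
      obtain ⟨f, rfl⟩ := hsub hes
      exact ⟨f ≫ h₁, by simp [hδh₁]⟩
    obtain ⟨c, ⟨h₂⟩, P₂⟩ := ih c₁ s₁ hs₁fin hs₁card hs₁sub
    refine ⟨c, ⟨h₁ ≫ h₂⟩, fun χ => ?_⟩
    obtain ⟨g₂, hg₂⟩ := P₂ χ
    obtain ⟨g₁, hconst, hpush⟩ := hprop (fun f => χ (f ≫ g₂))
    refine ⟨g₁ ≫ g₂, fun f₁ f₂ hmem heq => ?_⟩
    by_cases hcase : δ.map f₁ = f'
    · have := hconst f₁ f₂ hcase (heq ▸ hcase)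
      simpa using this
    · have hd1 : δ.map (f₁ ≫ g₁) = δ.map f₁ ≫ g' := by
        rw [δ.map_comp, hpush _ hmem]
      have hmem₁ : δ.map (f₁ ≫ g₁) ∈ s₁ := by
        rw [hd1]; exact ⟨δ.map f₁, ⟨hmem, hcase⟩, rfl⟩
      have hd2 : δ.map (f₁ ≫ g₁) = δ.map (f₂ ≫ g₁) := by
        rw [δ.map_comp, δ.map_comp, heq]
      have := hg₂ (f₁ ≫ g₁) (f₂ ≫ g₁) hmem₁ hd2
      simpa using this

/-- If `δ` fulfills (FP) at `a` (i.e. at `a, b` for every `b`), then `δ` fulfills (P) at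
`a, b` for each `b` with `δ(hom(a,b))` finite. -/
theorem fulfillsP_of_fulfillsFP {C : Type u} [Category.{v} C] {D : Type u₂} [Category.{v₂} D]
    (δ : C ⥤ D) (a : C) (hFP : ∀ b : C, FulfillsFP δ a b) :
    ∀ b : C, (Set.range fun f : a ⟶ b => δ.map f).Finite → FulfillsP δ a b := by
  intro b hfin r
  obtain ⟨c, ⟨-⟩, P⟩ := key_lemma δ a hFP r _ b _ hfin le_rfl subset_rfl
  refine ⟨c, fun χ => ?_⟩
  obtain ⟨g, hg⟩ := P χ
  exact ⟨g, fun f₁ f₂ heq => hg f₁ f₂ ⟨f₁, rfl⟩ heq⟩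
end

section
/- The functor ∂_R: R → R fulfills (FP) at every pair of objects, i.e., for every r∈ℕ, every pair k,l of objects of R, and every finite non-empty s⊆∂_R(hom(k,l)), there exist m∈ob(R), x'∈s, y'∈∂_R(hom(l,m)) such that for each r-coloring χ of hom(k,m) there exists (y,m)∈hom(l,m) with: χ constant on {(y,m)·(x,l) : (x,l)∈hom(k,l), ∂_R(x,l)=x'} and (∂_R(y,m))·e = y'·e for each e∈s. -/
/-- Morphisms of the category `R` from `m` to `n`: subsets `x ⊆ [n] = {1,…,n}` with `|x| = m`
(the pair `(x,n)` is recorded by the type depending on `n`). -/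
def RHom (m n : ℕ) : Type := {x : Finset ℕ // x ⊆ Finset.Icc 1 n ∧ x.card = m}

/-- The increasing enumeration of a finset `y` of size `l`, as a function `[l] → y`,
extended by `0` off `[l] = {1,…,l}`. -/
noncomputable def Renum (y : Finset ℕ) {l : ℕ} (h : y.card = l) (j : ℕ) : ℕ :=
  if hj : j - 1 < l then (y.orderIsoOfFin h ⟨j - 1, hj⟩ : ℕ) else 0

/-- Composition in `R`: `(y,n) · (x,m) = (f_y(x), n)` where `f_y : [m] → y` is the unique
increasing bijection. -/
noncomputable def Rcomp {k l m : ℕ} (x : RHom k l) (y : RHom l m) : RHom k m :=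
  ⟨x.1.image (Renum y.1 y.2.2), by
    constructor
    · intro z hz
      simp only [Finset.mem_image] at hz
      obtain ⟨j, hj, rfl⟩ := hz
      have hjl : j ∈ Finset.Icc 1 l := x.2.1 hj
      rw [Finset.mem_Icc] at hjl
      have hlt : j - 1 < l := by omega
      unfold Renum
      rw [dif_pos hlt]
      exact y.2.1 (y.1.orderIsoOfFin y.2.2 ⟨j - 1, hlt⟩).2
    · rw [Finset.card_image_of_injOn, x.2.2]
      intro j₁ h₁ j₂ h₂ he
      have hj₁ := x.2.1 h₁
      have hj₂ := x.2.1 h₂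
      rw [Finset.mem_Icc] at hj₁ hj₂
      have l₁ : j₁ - 1 < l := by omega
      have l₂ : j₂ - 1 < l := by omega
      unfold Renum at he
      rw [dif_pos l₁, dif_pos l₂] at he
      have hfin : (⟨j₁ - 1, l₁⟩ : Fin l) = ⟨j₂ - 1, l₂⟩ :=
        (y.1.orderIsoOfFin y.2.2).injective (Subtype.ext he)
      have hv : j₁ - 1 = j₂ - 1 := congrArg Fin.val hfin
      omega⟩

/-- The functor `∂_R` on objects: `n ↦ max(n−1, 0)` (truncated subtraction). -/
def RdelObj (n : ℕ) : ℕ := n - 1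

/-- The functor `∂_R` on morphisms: `(x,n) ↦ (x ∖ {max x}, max(n−1,0))`
(and `(∅,n) ↦ (∅, max(n−1,0))`). -/
def Rdel {m n : ℕ} (x : RHom m n) : RHom (RdelObj m) (RdelObj n) :=
  ⟨x.1.erase (x.1.max.unbotD 0), by
    constructor
    · intro z hz
      have hz' := Finset.mem_of_mem_erase hz
      have hne := Finset.ne_of_mem_erase hz
      have hnonempty : x.1.Nonempty := ⟨z, hz'⟩
      have hmax : x.1.max.unbotD 0 = x.1.max' hnonempty := by
        rw [← Finset.coe_max' hnonempty]; rfl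
      have hle : z ≤ x.1.max' hnonempty := Finset.le_max' _ z hz'
      have hlt : z < x.1.max' hnonempty := lt_of_le_of_ne hle (by rw [← hmax]; exact hne)
      have hmem := x.2.1 (x.1.max'_mem hnonempty)
      rw [Finset.mem_Icc] at hmem
      have hzmem := x.2.1 hz'
      rw [Finset.mem_Icc] at hzmem
      rw [Finset.mem_Icc]
      unfold RdelObj
      omega
    · rcases x.1.eq_empty_or_nonempty with he | hne
      · have hm : m = 0 := by rw [← x.2.2, he]; rfl
        rw [he]
        simp [hm, RdelObj]
      · have hmax : x.1.max.unbotD 0 = x.1.max' hne := by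
          rw [← Finset.coe_max' hne]; rfl
        rw [hmax, Finset.card_erase_of_mem (x.1.max'_mem hne), x.2.2]
        rfl⟩

/-
Pick `x' ∈ s` whose largest element `M` is maximal among the members of `s`, so every `e ∈ s`
lies in `[1, M]`. The morphisms `x` with `∂x = x'` are the sets `x' ∪ {t}` with `M < t ≤ l`.
Colour `v ∈ (M, m]` by `χ (x' ∪ {v})`; for `m` large the pigeonhole principle gives a
monochromatic `V` of size `l - M`, and `y = [1, M] ∪ V` maps `x' ∪ {t}` to `x' ∪ {y t}` with
`y t ∈ V`, so `χ` is constant on `y · ∂⁻¹(x')`. Both `∂y` and `y' = ∂[1, l]` contain `[1, M]`,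
hence fix it pointwise and agree on every `e ∈ s`.
-/

open Finset

lemma exists_monochromatic_subset_Ioc {α : Type*} [Fintype α] (c : ℕ → α) {M m q : ℕ}
    (h : M + Fintype.card α * q ≤ m) : ∃ V ⊆ Ioc M m, V.card = q ∧ ∃ a, ∀ v ∈ V, c v = a := by
  classical
  obtain ⟨a, -, ha⟩ := exists_le_card_fiber_of_mul_le_card_of_maps_to (s := Ioc M m)
    (fun v _ => mem_univ (c v)) ⟨c 0, mem_univ _⟩ (n := q) (by simp; omega)
  obtain ⟨V, hV, hVcard⟩ := exists_subset_card_eq ha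
  exact ⟨V, hV.trans (filter_subset _ _), hVcard, a, fun v hv => (mem_filter.1 (hV hv)).2⟩

lemma Finset.max_unbotD_zero_eq_sup_id (z : Finset ℕ) : z.max.unbotD 0 = z.sup id := by
  rcases z.eq_empty_or_nonempty with rfl | hz
  · rfl
  · rw [← coe_max' hz, WithBot.unbotD_coe, max'_eq_sup', sup'_eq_sup]

section Renum

variable {y : Finset ℕ} {l M : ℕ}

lemma Renum_eq_orderEmbOfFin (h : y.card = l) {j : ℕ} (hj : j ∈ Icc 1 l) :
    Renum y h j = y.orderEmbOfFin h ⟨j - 1, by grind⟩ := by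
  rw [Renum, dif_pos]; rfl

lemma Renum_mem (h : y.card = l) {j : ℕ} (hj : j ∈ Icc 1 l) : Renum y h j ∈ y := by
  rw [Renum_eq_orderEmbOfFin h hj]
  exact orderEmbOfFin_mem y h _

lemma Renum_strictMonoOn (h : y.card = l) : StrictMonoOn (Renum y h) (Icc 1 l) := by
  intro i hi j hj hij
  rw [Renum_eq_orderEmbOfFin h hi, Renum_eq_orderEmbOfFin h hj]
  exact (y.orderEmbOfFin h).strictMono (Fin.mk_lt_mk.2 (by grind))

lemma Renum_eq_of_strictMonoOn (h : y.card = l) {f : ℕ → ℕ} (hf : StrictMonoOn f (Icc 1 l))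
    (hfy : ∀ j ∈ Icc 1 l, f j ∈ y) {j : ℕ} (hj : j ∈ Icc 1 l) : Renum y h j = f j := by
  have hmem (i : Fin l) : i.1 + 1 ∈ Icc 1 l := by grind
  have huniq := orderEmbOfFin_unique h (f := fun i => f (i + 1)) (fun i => hfy _ (hmem i))
    (fun i i' hii' => hf (hmem i) (hmem i') (by simpa using hii'))
  rw [Renum_eq_orderEmbOfFin h hj, ← huniq]
  grind

lemma Renum_Icc {n : ℕ} (h : (Icc 1 n).card = l) {j : ℕ} (hj : j ∈ Icc 1 l) :
    Renum (Icc 1 n) h j = j := by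
  obtain rfl : n = l := by simpa using h
  exact Renum_eq_of_strictMonoOn h strictMonoOn_id (fun _ hj => hj) hj

lemma Renum_union {A B : Finset ℕ} (hAB : ∀ a ∈ A, ∀ b ∈ B, a < b) (h : (A ∪ B).card = l)
    {j : ℕ} (hj : j ∈ Icc 1 l) :
    Renum (A ∪ B) h j = if j ≤ A.card then Renum A rfl j else Renum B rfl (j - A.card) := by
  refine Renum_eq_of_strictMonoOn h (f := fun j =>
    if j ≤ A.card then Renum A rfl j else Renum B rfl (j - A.card)) ?_ ?_ hj
  · intro i hi j hj hij
    simp only [coe_Icc, Set.mem_Icc] at hi hj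
    dsimp only
    split_ifs with hiA hjA hjA
    · exact Renum_strictMonoOn rfl (by grind) (by grind) hij
    · exact hAB _ (Renum_mem rfl (by grind)) _ (Renum_mem rfl (by grind))
    · omega
    · exact Renum_strictMonoOn rfl (by grind) (by grind) (by omega)
  · intro i hi
    simp only [mem_Icc] at hi
    split_ifs with hiA
    · exact mem_union_left _ (Renum_mem rfl (by grind))
    · exact mem_union_right _ (Renum_mem rfl (by grind))

lemma Renum_eq_self_of_Icc_subset (h : y.card = l) (hy₀ : 0 ∉ y) (hMy : Icc 1 M ⊆ y) {j : ℕ}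
    (hj : j ∈ Icc 1 M) : Renum y h j = j := by
  have hMl : M ≤ l := by simpa [← h] using card_le_card hMy
  obtain ⟨B, hB, rfl⟩ : ∃ B : Finset ℕ, (∀ b ∈ B, M < b) ∧ y = Icc 1 M ∪ B := by
    refine ⟨y.filter (M < ·), by simp, ?_⟩
    ext a
    simp only [mem_union, mem_Icc, mem_filter]
    have := @hMy a
    grind
  rw [Renum_union (by grind) h (by grind), if_pos (by simp; grind), Renum_Icc _ (by simpa using hj)]

lemma image_Renum_eq_self (h : y.card = l) (hy₀ : 0 ∉ y) (hMy : Icc 1 M ⊆ y) {e : Finset ℕ}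
    (he : e ⊆ Icc 1 M) : e.image (Renum y h) = e := by
  conv_rhs => rw [← image_id (s := e)]
  exact image_congr fun j hj => Renum_eq_self_of_Icc_subset h hy₀ hMy (he hj)

lemma Renum_mem_of_eq_Icc_union {V : Finset ℕ} (hV : ∀ v ∈ V, M < v) (hy : y = Icc 1 M ∪ V)
    (h : y.card = l) {t : ℕ} (ht : t ∈ Ioc M l) : Renum y h t ∈ V := by
  subst hy
  have hcard : V.card = l - M := by
    rw [← h, card_union_of_disjoint (disjoint_left.2 fun a ha hb => by grind), Nat.card_Icc]
    omega
  rw [Renum_union (by grind) h (by grind), if_neg (by simp; grind)]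
  exact Renum_mem rfl (by simp at ht ⊢; omega)

end Renum

namespace RHom

variable {m n : ℕ}

lemma zero_notMem (x : RHom m n) : 0 ∉ x.1 := fun h => by simpa using x.2.1 h

lemma subset_Icc_sup (x : RHom m n) : x.1 ⊆ Icc 1 (x.1.sup id) := fun _ ha =>
  mem_Icc.2 ⟨(mem_Icc.1 (x.2.1 ha)).1, le_sup (f := id) ha⟩

instance : Subsingleton (RHom 0 n) :=
  ⟨fun x y => Subtype.ext (by rw [card_eq_zero.1 x.2.2, card_eq_zero.1 y.2.2])⟩

def incl (h : m ≤ n) : RHom m n := ⟨Icc 1 m, Icc_subset_Icc_right h, by simp⟩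

lemma exists_val_eq_Icc_union {M : ℕ} {V : Finset ℕ} (hV : V ⊆ Ioc M n) (hcard : V.card = m - M)
    (hM : M ≤ m) (hmn : m ≤ n) : ∃ y : RHom m n, y.1 = Icc 1 M ∪ V := by
  refine ⟨⟨Icc 1 M ∪ V, union_subset (Icc_subset_Icc_right (by grind)) ?_, ?_⟩, rfl⟩
  · exact hV.trans fun v hv => by grind
  · rw [card_union_of_disjoint (disjoint_left.2 fun a ha hb => by grind), hcard, Nat.card_Icc]
    omega

end RHom

lemma Rdel_val {m n : ℕ} (x : RHom m n) : (Rdel x).1 = x.1.erase (x.1.sup id) := by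
  show x.1.erase _ = _
  rw [Finset.max_unbotD_zero_eq_sup_id]

lemma Rcomp_val {k l m : ℕ} (x : RHom k l) (y : RHom l m) :
    (Rcomp x y).1 = x.1.image (Renum y.1 y.2.2) := rfl

lemma Rcomp_val_eq_of_subset_Icc {k l m M : ℕ} {e : RHom k l} {y : RHom l m}
    (he : e.1 ⊆ Icc 1 M) (hMy : Icc 1 M ⊆ y.1) : (Rcomp e y).1 = e.1 :=
  image_Renum_eq_self _ y.zero_notMem hMy he

lemma Icc_subset_Rdel {m n M : ℕ} {y : RHom m n} (hMy : Icc 1 M ⊆ y.1) (hM : M ≤ m - 1) :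
    Icc 1 M ⊆ (Rdel y).1 := by
  intro a ha
  have hm : m ≤ y.1.sup id := by simpa [y.2.2] using card_le_card y.subset_Icc_sup
  rw [Rdel_val, mem_erase]
  exact ⟨by grind, hMy ha⟩

lemma exists_mem_Ioc_eq_insert_Rdel {k l : ℕ} (hk : 0 < k) (x : RHom k l) :
    ∃ t ∈ Ioc ((Rdel x).1.sup id) l, x.1 = insert t (Rdel x).1 := by
  have hx : x.1.Nonempty := card_pos.1 (by rw [x.2.2]; exact hk)
  obtain ⟨t, htx, ht⟩ := exists_mem_eq_sup x.1 hx id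
  have ht1l := mem_Icc.1 (x.2.1 htx)
  refine ⟨t, mem_Ioc.2 ⟨?_, ht1l.2⟩, ?_⟩
  · rw [Rdel_val, ht, Finset.sup_lt_iff (by simp; omega)]
    intro a ha
    exact lt_of_le_of_ne ((le_sup (f := id) (mem_of_mem_erase ha)).trans_eq ht)
      (ne_of_mem_erase ha)
  · rw [Rdel_val, ht, id, insert_erase htx]

lemma Rcomp_val_eq_insert {k l m : ℕ} (hk : 0 < k) (x : RHom k l) {y : RHom l m}
    (hy : Icc 1 ((Rdel x).1.sup id) ⊆ y.1) :
    ∃ t ∈ Ioc ((Rdel x).1.sup id) l, (Rcomp x y).1 = insert (Renum y.1 y.2.2 t) (Rdel x).1 := by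
  obtain ⟨t, ht, hx⟩ := exists_mem_Ioc_eq_insert_Rdel hk x
  refine ⟨t, ht, ?_⟩
  rw [Rcomp_val, hx, image_insert, image_Renum_eq_self _ y.zero_notMem hy (RHom.subset_Icc_sup _)]

theorem Rdel_fulfillsFP_general (r k l : ℕ) (s : Set (RHom (RdelObj k) (RdelObj l)))
    (hfin : s.Finite) (hne : s.Nonempty) :
    ∃ (m : ℕ) (x' : RHom (RdelObj k) (RdelObj l)) (y' : RHom (RdelObj l) (RdelObj m)),
      x' ∈ s ∧ (∃ y₀ : RHom l m, Rdel y₀ = y') ∧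
      ∀ χ : RHom k m → Fin r, ∃ y : RHom l m,
        (∀ x₁ x₂ : RHom k l, Rdel x₁ = x' → Rdel x₂ = x' →
          χ (Rcomp x₁ y) = χ (Rcomp x₂ y)) ∧
        (∀ e ∈ s, Rcomp e (Rdel y) = Rcomp e y') := by
  obtain ⟨x', hx's, hx'max⟩ := Set.exists_max_image s (fun e => e.1.sup id) hfin hne
  set M := x'.1.sup id
  have hsM (e) (he : e ∈ s) : e.1 ⊆ Icc 1 M :=
    e.subset_Icc_sup.trans (Icc_subset_Icc_right (hx'max e he))
  have hMl : M ≤ l - 1 := Finset.sup_le fun a ha => (mem_Icc.1 (x'.2.1 ha)).2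
  set m := l + Fintype.card (Option (Fin r)) * l
  have hlm : l ≤ m := Nat.le_add_right _ _
  refine ⟨m, x', Rdel (RHom.incl hlm), hx's, ⟨_, rfl⟩, fun χ => ?_⟩
  -- `none` is the colour of the sets `insert v x'` that are not morphisms `k ⟶ m`
  obtain ⟨V, hVsub, hVcard, a, hVa⟩ := exists_monochromatic_subset_Ioc
    (fun v => Function.extend Subtype.val (some ∘ χ) (fun _ => none) (insert v x'.1))
    (M := M) (m := m) (q := l - M) (Nat.add_le_add (by omega) (Nat.mul_le_mul_left _ (by omega)))
  obtain ⟨y, hy⟩ := RHom.exists_val_eq_Icc_union hVsub hVcard (by omega) hlm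
  have hMy : Icc 1 M ⊆ y.1 := hy ▸ subset_union_left
  refine ⟨y, fun x₁ x₂ h₁ h₂ => ?_, fun e he => ?_⟩
  · rcases k.eq_zero_or_pos with rfl | hk
    · rw [Subsingleton.elim x₁ x₂]
    have hcolor (x : RHom k l) (hx : Rdel x = x') : some (χ (Rcomp x y)) = a := by
      subst hx
      obtain ⟨t, ht, hxy⟩ := Rcomp_val_eq_insert hk x hMy
      rw [← hVa _ (Renum_mem_of_eq_Icc_union (by grind) hy y.2.2 ht), ← hxy]
      exact (Subtype.val_injective.extend_apply (some ∘ χ) (fun _ => none) (Rcomp x y)).symm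
    exact Option.some_injective _ ((hcolor x₁ h₁).trans (hcolor x₂ h₂).symm)
  · have hy' : Icc 1 M ⊆ (RHom.incl hlm).1 := Icc_subset_Icc_right (by omega)
    exact Subtype.ext ((Rcomp_val_eq_of_subset_Icc (hsM e he) (Icc_subset_Rdel hMy hMl)).trans
      (Rcomp_val_eq_of_subset_Icc (hsM e he) (Icc_subset_Rdel hy' hMl)).symm)

/-- The functor `∂_R : R → R` fulfills (FP) at every pair of objects `k, l`: for every
`r ∈ ℕ` and every finite non-empty `s ⊆ ∂_R(hom(k,l))` there exist an object `m`, `x' ∈ s`,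
and `y' ∈ ∂_R(hom(l,m))` such that for each `r`-coloring `χ` of `hom(k,m)` there exists
`y ∈ hom(l,m)` with `χ` constant on `{y · x : x ∈ hom(k,l), ∂_R x = x'}` and
`(∂_R y) · e = y' · e` for each `e ∈ s`. -/
theorem Rdel_fulfillsFP (r k l : ℕ) (s : Set (RHom (RdelObj k) (RdelObj l)))
    (hfin : s.Finite) (hne : s.Nonempty)
    (hsub : s ⊆ Set.range (fun x : RHom k l => Rdel x)) :
    ∃ (m : ℕ) (x' : RHom (RdelObj k) (RdelObj l)) (y' : RHom (RdelObj l) (RdelObj m)),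
      x' ∈ s ∧ (∃ y₀ : RHom l m, Rdel y₀ = y') ∧
      ∀ χ : RHom k m → Fin r, ∃ y : RHom l m,
        (∀ x₁ x₂ : RHom k l, Rdel x₁ = x' → Rdel x₂ = x' →
          χ (Rcomp x₁ y) = χ (Rcomp x₂ y)) ∧
        (∀ e ∈ s, Rcomp e (Rdel y) = Rcomp e y') :=
  Rdel_fulfillsFP_general r k l s hfin hne
end

section
/- For all k,l∈ℕ and r∈ℕ there exists m∈ℕ such that for every r-coloring of the k-element subsets of [m]={1,…,m} there exists a set b⊆[m] with |b|=l such that all k-element subsets of b receive the same color. (Classical Ramsey theorem.) -/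
lemma inf_ramsey : ∀ (k r : ℕ) (f : Finset ℕ → Fin r) (S : Set ℕ), S.Infinite →
    ∃ T ⊆ S, T.Infinite ∧ ∃ c, ∀ s : Finset ℕ, ↑s ⊆ T → s.card = k → f s = c := by
  intro k
  induction k with
  | zero =>
    intro r f S hS
    exact ⟨S, subset_rfl, hS, f ∅, fun s hs h => by
      simp [Finset.card_eq_zero.mp h]⟩
  | succ k ih =>
    intro r f S hS
    have step : ∀ (A : Set ℕ) (h : A.Infinite), ∃ (a : ℕ) (c : Fin r) (B : Set ℕ),
        a ∈ A ∧ B ⊆ A ∧ B.Infinite ∧ (∀ x ∈ B, a < x) ∧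
        ∀ t : Finset ℕ, ↑t ⊆ B → t.card = k → f (insert a t) = c := by
      intro A hA
      obtain ⟨a, ha⟩ := hA.nonempty
      have hB0 : (A \ {x | x ≤ a}).Infinite := hA.diff (Set.finite_le_nat a)
      obtain ⟨T, hTsub, hTinf, c, hc⟩ := ih r (fun t => f (insert a t)) _ hB0
      exact ⟨a, c, T, ha, fun x hx => (hTsub hx).1, hTinf,
        fun x hx => lt_of_not_ge (hTsub hx).2, hc⟩
    choose a! c! B! h1 h2 h3 h4 h5 using step
    let A : ℕ → {A : Set ℕ // A.Infinite} := fun n =>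
      Nat.rec ⟨S, hS⟩ (fun _ p => ⟨B! p.1 p.2, h3 p.1 p.2⟩) n
    have hAsucc : ∀ n, (A (n+1)).1 = B! (A n).1 (A n).2 := fun n => rfl
    set aa : ℕ → ℕ := fun n => a! (A n).1 (A n).2 with haa
    set cc : ℕ → Fin r := fun n => c! (A n).1 (A n).2 with hcc
    have hmem : ∀ n, aa n ∈ (A n).1 := fun n => h1 _ _
    have hsub : ∀ n, (A (n+1)).1 ⊆ (A n).1 := fun n => h2 _ _
    have hAS : ∀ n, (A n).1 ⊆ S := by
      intro n; induction n with
      | zero => exact subset_rfl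
      | succ n ihn => exact (hsub n).trans ihn
    have hmono : ∀ i j, i ≤ j → (A j).1 ⊆ (A i).1 := by
      intro i j hij
      induction j with
      | zero => simp_all
      | succ j ihj =>
        rcases Nat.lt_or_ge i (j+1) with h | h
        · exact (hsub j).trans (ihj (Nat.lt_succ_iff.mp h))
        · have : i = j + 1 := le_antisymm hij h
          subst this; exact subset_rfl
    have hlt : ∀ i j, i < j → aa i < aa j := by
      intro i j hij
      have : aa j ∈ (A (i+1)).1 := hmono (i+1) j hij (hmem j)
      exact h4 _ _ _ this
    obtain ⟨v, hv⟩ := Finite.exists_infinite_fiber cc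
    have hI : (cc ⁻¹' {v}).Infinite := Set.infinite_coe_iff.mp hv
    refine ⟨aa '' (cc ⁻¹' {v}), ?_, ?_, v, ?_⟩
    · rintro x ⟨n, -, rfl⟩
      exact hAS n (hmem n)
    · exact hI.image (Set.injOn_of_injective (fun i j h => by
        rcases lt_trichotomy i j with h' | h' | h'
        · exact absurd h (ne_of_lt (hlt i j h'))
        · exact h'
        · exact absurd h.symm (ne_of_lt (hlt j i h'))))
    · intro s hs hcard
      have hne : s.Nonempty := by rw [← Finset.card_pos, hcard]; omega
      obtain ⟨i, hiv, hia⟩ := hs (s.min'_mem hne)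
      set t := s.erase (s.min' hne) with ht
      have htcard : t.card = k := by
        rw [ht, Finset.card_erase_of_mem (s.min'_mem hne), hcard]; omega
      have htsub : ↑t ⊆ (A (i+1)).1 := by
        intro x hx
        have hxs : x ∈ s := Finset.mem_of_mem_erase hx
        obtain ⟨j, hjv, hja⟩ := hs hxs
        have hxgt : aa i < x :=
          hia ▸ lt_of_le_of_ne (s.min'_le x hxs) (Ne.symm (Finset.ne_of_mem_erase hx))
        have hij : i < j := by
          by_contra hh
          push_neg at hh
          rcases lt_or_eq_of_le hh with h' | h'
          · exact absurd (hja ▸ hxgt) (not_lt.mpr (le_of_lt (hlt j i h')))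
          · exact absurd (hja ▸ hxgt) (by simp [h'])
        exact hmono (i+1) j hij (hja ▸ hmem j)
      have := h5 (A i).1 (A i).2 t (by rw [← hAsucc i] at *; exact htsub) htcard
      have hins : insert (aa i) t = s := by
        rw [ht, hia]; exact Finset.insert_erase (s.min'_mem hne)
      rw [← hins, this]
      simpa using hiv

lemma ramsey_aux (k l r : ℕ) (hr : 0 < r) :
    ∃ m : ℕ, ∀ χ : {s : Finset ℕ // s ⊆ Finset.Icc 1 m ∧ s.card = k} → Fin r,
      ∃ b : Finset ℕ, b ⊆ Finset.Icc 1 m ∧ b.card = l ∧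
        ∀ s₁ s₂ : {s : Finset ℕ // s ⊆ Finset.Icc 1 m ∧ s.card = k},
          s₁.1 ⊆ b → s₂.1 ⊆ b → χ s₁ = χ s₂ := by
  by_contra hbad
  push_neg at hbad
  choose χ hχ using hbad
  set F : ℕ → Finset ℕ → Fin r := fun m s =>
    if h : s ⊆ Finset.Icc 1 m ∧ s.card = k then χ m ⟨s, h⟩ else ⟨0, hr⟩ with hF
  have : (Filter.cofinite : Filter ℕ).NeBot := Nat.cofinite_eq_atTop ▸ Filter.atTop_neBot
  set U : Ultrafilter ℕ := Ultrafilter.of Filter.cofinite with hU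
  have hUcof : (U : Filter ℕ) ≤ Filter.cofinite := Ultrafilter.of_le _
  have key : ∀ s : Finset ℕ, ∃ v : Fin r, {m | F m s = v} ∈ U := by
    intro s
    by_contra h
    push_neg at h
    have h2 : ∀ v : Fin r, {m | F m s = v}ᶜ ∈ U :=
      fun v => Ultrafilter.compl_mem_iff_notMem.mpr (h v)
    have h3 : (⋂ v : Fin r, {m | F m s = v}ᶜ) ∈ U := Filter.iInter_mem.mpr h2
    obtain ⟨m, hm⟩ := Filter.nonempty_of_mem h3
    simp only [Set.mem_iInter, Set.mem_compl_iff, Set.mem_setOf_eq] at hm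
    exact hm (F m s) rfl
  choose c hc using key
  obtain ⟨T, hTsub, hTinf, v, hT⟩ := inf_ramsey k r c (Set.Ici 1)
    (Set.Ici_infinite 1)
  obtain ⟨b, hbT, hbcard⟩ := hTinf.exists_subset_card_eq l
  have hbig : {m : ℕ | ∀ x ∈ b, x ≤ m} ∈ U := by
    apply hUcof
    rw [Filter.mem_cofinite]
    apply Set.Finite.subset (Set.finite_Iio (b.sup id + 1))
    intro m hm
    simp only [Set.mem_compl_iff, Set.mem_setOf_eq, not_forall] at hm
    obtain ⟨x, hxb, hxm⟩ := hm
    have : x ≤ b.sup id := Finset.le_sup (f := id) hxb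
    simp only [Set.mem_Iio]; omega
  have hall : (⋂ s ∈ b.powersetCard k, {m | F m s = c s}) ∈ U :=
    (Filter.biInter_finset_mem _).mpr (fun s _ => hc s)
  obtain ⟨m, hm1, hm2⟩ := Filter.nonempty_of_mem (Filter.inter_mem hbig hall)
  simp only [Set.mem_iInter, Set.mem_setOf_eq] at hm1 hm2
  have hbIcc : b ⊆ Finset.Icc 1 m := by
    intro x hx
    rw [Finset.mem_Icc]
    exact ⟨hTsub (hbT hx), hm1 x hx⟩
  obtain ⟨s₁, s₂, hs₁, hs₂, hne⟩ := hχ m b hbIcc hbcard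
  have hval : ∀ (s : {s : Finset ℕ // s ⊆ Finset.Icc 1 m ∧ s.card = k}),
      s.1 ⊆ b → χ m s = v := by
    rintro ⟨s, hs⟩ hsb
    have h1 : χ m ⟨s, hs⟩ = F m s := by rw [hF]; simp [dif_pos hs]
    have h2 : F m s = c s := hm2 s (Finset.mem_powersetCard.mpr ⟨hsb, hs.2⟩)
    have h3 : c s = v := hT s (fun x hx => hbT (hsb hx)) hs.2
    rw [h1, h2, h3]
  exact hne ((hval s₁ hs₁).trans (hval s₂ hs₂).symm)

/-- The classical Ramsey theorem: for all `k, l, r ∈ ℕ` there exists `m` such that for every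
`r`-coloring of the `k`-element subsets of `[m] = {1,…,m}` there exists `b ⊆ [m]` with
`|b| = l` such that all `k`-element subsets of `b` receive the same color. -/
theorem classical_ramsey (k l r : ℕ) :
    ∃ m : ℕ, ∀ χ : {s : Finset ℕ // s ⊆ Finset.Icc 1 m ∧ s.card = k} → Fin r,
      ∃ b : Finset ℕ, b ⊆ Finset.Icc 1 m ∧ b.card = l ∧
        ∀ s₁ s₂ : {s : Finset ℕ // s ⊆ Finset.Icc 1 m ∧ s.card = k},
          s₁.1 ⊆ b → s₂.1 ⊆ b → χ s₁ = χ s₂ := by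
  rcases Nat.eq_zero_or_pos r with hr | hr
  · subst hr
    exact ⟨l, fun χ => ⟨Finset.Icc 1 l, subset_rfl, by simp,
      fun s₁ _ _ _ => (χ s₁).elim0⟩⟩
  · exact ramsey_aux k l r hr
end

section
/- Let r∈ℕ and let k₁,…,k_l and p₁,…,p_l be natural numbers. There exist natural numbers q₁,…,q_l such that for each r-coloring of the set {(a₁,…,a_l) : aᵢ⊆[qᵢ], |aᵢ|=kᵢ for all i≤l} there exist sets b₁⊆[q₁],…,b_l⊆[q_l] with |bᵢ|=pᵢ for each i≤l such that the set {(a₁,…,a_l) : aᵢ⊆bᵢ, |aᵢ|=kᵢ for all i≤l} is monochromatic. (Product Ramsey theorem.) -/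
open Finset

/-- Finite hypergraph Ramsey: for any finite nonempty color type, sizes `k`, `p`,
there is `q` such that any `q`-set contains a `p`-set all of whose `k`-subsets
get the same color. -/
theorem my_ramsey (γ : Type) [Fintype γ] [Nonempty γ] (k : ℕ) : ∀ p : ℕ,
    ∃ q : ℕ, ∀ S : Finset ℕ, q ≤ S.card → ∀ χ : Finset ℕ → γ,
      ∃ b, b ⊆ S ∧ b.card = p ∧ ∃ c, ∀ a, a ⊆ b → a.card = k → χ a = c := by
  induction k with
  | zero =>
    intro p
    refine ⟨p, fun S hS χ => ?_⟩
    obtain ⟨b, hbS, hbcard⟩ := Finset.exists_subset_card_eq hS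
    exact ⟨b, hbS, hbcard, χ ∅, fun a _ ha => by rw [Finset.card_eq_zero.mp ha]⟩
  | succ k IH =>
    intro p
    classical
    -- choose a Ramsey function for dimension k
    choose g hg using IH
    -- iterated function
    set f : ℕ → ℕ := fun m => Nat.rec 0 (fun _ u => g u + 1) m with hf
    have hf0 : f 0 = 0 := rfl
    have hfs : ∀ m, f (m + 1) = g (f m) + 1 := fun m => rfl
    set m := Fintype.card γ * p with hm
    refine ⟨f m, fun S hS χ => ?_⟩
    -- build the sequence
    have key : ∀ (n : ℕ) (S : Finset ℕ), f n ≤ S.card →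
        ∃ (x : Fin n → ℕ) (c : Fin n → γ) (T : Fin n → Finset ℕ),
          (∀ j, x j ∈ S) ∧ (∀ j, T j ⊆ S.erase (x j)) ∧
          (∀ j j', j < j' → x j' ∈ T j ∧ T j' ⊆ T j) ∧
          (∀ j a, a ⊆ T j → a.card = k → χ (insert (x j) a) = c j) := by
      intro n
      induction n with
      | zero =>
        intro S _
        exact ⟨Fin.elim0, Fin.elim0, Fin.elim0, fun j => j.elim0, fun j => j.elim0,
          fun j => j.elim0, fun j => j.elim0⟩
      | succ n ih =>
        intro S hS
        rw [hfs] at hS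
        have hSne : S.Nonempty := Finset.card_pos.mp (by omega)
        obtain ⟨x₀, hx₀⟩ := hSne
        have herase : g (f n) ≤ (S.erase x₀).card := by
          rw [Finset.card_erase_of_mem hx₀]; omega
        obtain ⟨T₀, hT₀S, hT₀card, c₀, hc₀⟩ :=
          hg (f n) (S.erase x₀) herase (fun a => χ (insert x₀ a))
        obtain ⟨x', c', T', hx'S, hT'S, hnest, hcol⟩ := ih T₀ (le_of_eq hT₀card.symm)
        refine ⟨Fin.cons x₀ x', Fin.cons c₀ c', Fin.cons T₀ T', ?_, ?_, ?_, ?_⟩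
        · intro j
          refine Fin.cases ?_ ?_ j
          · exact hx₀
          · intro i
            exact (Finset.mem_erase.mp (hT₀S (hx'S i))).2
        · intro j
          refine Fin.cases ?_ ?_ j
          · exact hT₀S
          · intro i
            -- T' i ⊆ S.erase (x' i)
            intro z hz
            have h1 := hT'S i hz
            rw [Finset.mem_erase] at h1 ⊢
            exact ⟨h1.1, (Finset.mem_erase.mp (hT₀S h1.2)).2⟩
        · intro j j' hlt
          induction j using Fin.cases with
          | zero =>
            induction j' using Fin.cases with
            | zero => exact absurd hlt (lt_irrefl _)
            | succ i' =>
              simp only [Fin.cons_succ, Fin.cons_zero]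
              refine ⟨hx'S i', fun z hz => ?_⟩
              exact (Finset.mem_erase.mp (hT'S i' hz)).2
          | succ i =>
            induction j' using Fin.cases with
            | zero =>
              simp only [Fin.lt_def, Fin.val_succ, Fin.val_zero] at hlt
              omega
            | succ i' =>
              simp only [Fin.cons_succ]
              exact hnest i i' (Fin.succ_lt_succ_iff.mp hlt)
        · intro j
          refine Fin.cases ?_ ?_ j
          · intro a haT hacard
            simp only [Fin.cons_zero]
            exact hc₀ a haT hacard
          · intro i a haT hacard
            simp only [Fin.cons_succ] at haT ⊢
            exact hcol i a haT hacard
    obtain ⟨x, c, T, hxS, hTS, hnest, hcol⟩ := key m S hS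
    -- x is injective
    have hxinj : Function.Injective x := by
      intro j j' hjj'
      by_contra hne
      rcases lt_or_gt_of_ne hne with h | h
      · have h1 := (hnest j j' h).1
        have h2 := hTS j h1
        rw [hjj'] at h2
        exact (Finset.mem_erase.mp h2).1 rfl
      · have h1 := (hnest j' j h).1
        have h2 := hTS j' h1
        rw [← hjj'] at h2
        exact (Finset.mem_erase.mp h2).1 rfl
    -- pigeonhole on colors
    obtain ⟨y, -, hy⟩ := Finset.exists_le_card_fiber_of_mul_le_card_of_maps_to
      (s := Finset.univ) (t := Finset.univ) (f := c) (n := p)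
      (fun a _ => Finset.mem_univ _) Finset.univ_nonempty
      (by simp [hm])
    obtain ⟨J, hJsub, hJcard⟩ := Finset.exists_subset_card_eq hy
    refine ⟨J.image x, ?_, ?_, y, ?_⟩
    · intro z hz
      obtain ⟨j, _, rfl⟩ := Finset.mem_image.mp hz
      exact hxS j
    · rw [Finset.card_image_of_injOn (Set.injOn_of_injective hxinj), hJcard]
    · intro a hab hacard
      -- index set of a
      have hane : a.Nonempty := Finset.card_pos.mp (by omega)
      set I : Finset (Fin m) := J.filter (fun j => x j ∈ a) with hI
      have hIne : I.Nonempty := by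
        obtain ⟨z, hz⟩ := hane
        obtain ⟨j, hjJ, rfl⟩ := Finset.mem_image.mp (hab hz)
        exact ⟨j, Finset.mem_filter.mpr ⟨hjJ, hz⟩⟩
      set j₀ := I.min' hIne with hj₀
      have hj₀I : j₀ ∈ I := I.min'_mem hIne
      have hj₀a : x j₀ ∈ a := (Finset.mem_filter.mp hj₀I).2
      have hj₀J : j₀ ∈ J := (Finset.mem_filter.mp hj₀I).1
      have herase_sub : a.erase (x j₀) ⊆ T j₀ := by
        intro z hz
        rw [Finset.mem_erase] at hz
        obtain ⟨j, hjJ, rfl⟩ := Finset.mem_image.mp (hab hz.2)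
        have hjI : j ∈ I := Finset.mem_filter.mpr ⟨hjJ, hz.2⟩
        have hle : j₀ ≤ j := I.min'_le j hjI
        have hne : j₀ ≠ j := fun h => hz.1 (by rw [h])
        exact (hnest j₀ j (lt_of_le_of_ne hle hne)).1
      have hcard' : (a.erase (x j₀)).card = k := by
        rw [Finset.card_erase_of_mem hj₀a, hacard]
        omega
      have : χ (insert (x j₀) (a.erase (x j₀))) = c j₀ := hcol j₀ _ herase_sub hcard'
      rw [Finset.insert_erase hj₀a] at this
      rw [this]
      have := Finset.mem_filter.mp (hJsub hj₀J)
      exact this.2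

/-- Product Ramsey with an arbitrary finite nonempty color type and total colorings. -/
theorem product_ramsey_aux (γ : Type) [Fintype γ] [Nonempty γ] : ∀ (l : ℕ) (k p : Fin l → ℕ),
    ∃ q : Fin l → ℕ, ∀ χ : (Fin l → Finset ℕ) → γ,
      ∃ b : Fin l → Finset ℕ,
        (∀ i, b i ⊆ Finset.Icc 1 (q i) ∧ (b i).card = p i) ∧
        ∀ a₁ a₂ : Fin l → Finset ℕ,
          (∀ i, a₁ i ⊆ b i ∧ (a₁ i).card = k i) →
          (∀ i, a₂ i ⊆ b i ∧ (a₂ i).card = k i) → χ a₁ = χ a₂ := by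
  intro l
  induction l with
  | zero =>
    intro k p
    refine ⟨Fin.elim0, fun χ => ⟨Fin.elim0, fun i => i.elim0, fun a₁ a₂ _ _ => ?_⟩⟩
    exact congrArg χ (funext fun i => i.elim0)
  | succ l ih =>
    intro k p
    classical
    by_cases hk : k 0 ≤ p 0
    · obtain ⟨q', hq'⟩ := ih (fun i => k i.succ) (fun i => p i.succ)
      haveI : DecidableEq (∀ i : Fin l, {s : Finset ℕ // s ∈ (Finset.Icc 1 (q' i)).powerset}) :=
        Classical.decEq _
      obtain ⟨Q₀, hQ₀⟩ := my_ramsey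
        ((∀ i : Fin l, {s : Finset ℕ // s ∈ (Finset.Icc 1 (q' i)).powerset}) → γ) (k 0) (p 0)
      refine ⟨Fin.cons Q₀ q', fun χ => ?_⟩
      set colorH : Finset ℕ → ((∀ i : Fin l, {s : Finset ℕ // s ∈ (Finset.Icc 1 (q' i)).powerset}) → γ) :=
        fun a₀ => fun t => χ (Fin.cons a₀ (fun i => (t i).1)) with hcolorH
      obtain ⟨b₀, hb₀sub, hb₀card, cH, hcH⟩ := hQ₀ (Finset.Icc 1 Q₀)
        (by rw [Nat.card_Icc]; omega) colorH
      obtain ⟨a₀s, ha₀sub, ha₀card⟩ := Finset.exists_subset_card_eq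
        (show k 0 ≤ b₀.card by rw [hb₀card]; exact hk)
      obtain ⟨b', hb'cond, hb'mono⟩ := hq' (fun a' => χ (Fin.cons a₀s a'))
      -- head swap lemma
      have swap : ∀ (a₀ : Finset ℕ), a₀ ⊆ b₀ → a₀.card = k 0 →
          ∀ t : Fin l → Finset ℕ, (∀ i, t i ⊆ Finset.Icc 1 (q' i)) →
          χ (Fin.cons a₀ t) = χ (Fin.cons a₀s t) := by
        intro a₀ hsub hcard t ht
        have h1 : colorH a₀ = cH := hcH a₀ hsub hcard
        have h2 : colorH a₀s = cH := hcH a₀s ha₀sub ha₀card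
        have := congrFun (h1.trans h2.symm)
          (fun i => (⟨t i, Finset.mem_powerset.mpr (ht i)⟩ :
            {s : Finset ℕ // s ∈ (Finset.Icc 1 (q' i)).powerset}))
        simpa [hcolorH] using this
      refine ⟨Fin.cons b₀ b', ?_, ?_⟩
      · intro i
        induction i using Fin.cases with
        | zero => simpa using ⟨hb₀sub, hb₀card⟩
        | succ i => simpa using hb'cond i
      · intro a₁ a₂ h₁ h₂
        have hta : ∀ (a : Fin (l+1) → Finset ℕ),
            (∀ i, a i ⊆ (Fin.cons b₀ b' : Fin (l+1) → Finset ℕ) i ∧ (a i).card = k i) →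
            χ a = χ (Fin.cons a₀s (Fin.tail a)) := by
          intro a ha
          have htail : ∀ i, Fin.tail a i ⊆ b' i ∧ (Fin.tail a i).card = k i.succ := by
            intro i
            simpa [Fin.tail] using ha i.succ
          have hIcc : ∀ i, Fin.tail a i ⊆ Finset.Icc 1 (q' i) :=
            fun i => (htail i).1.trans (hb'cond i).1
          have h0 : a 0 ⊆ b₀ ∧ (a 0).card = k 0 := by simpa using ha 0
          calc χ a = χ (Fin.cons (a 0) (Fin.tail a)) := by rw [Fin.cons_self_tail]
            _ = χ (Fin.cons a₀s (Fin.tail a)) := swap (a 0) h0.1 h0.2 (Fin.tail a) hIcc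
        rw [hta a₁ h₁, hta a₂ h₂]
        refine hb'mono (Fin.tail a₁) (Fin.tail a₂) ?_ ?_
        · intro i; simpa [Fin.tail] using h₁ i.succ
        · intro i; simpa [Fin.tail] using h₂ i.succ
    · refine ⟨p, fun χ => ⟨fun i => Finset.Icc 1 (p i),
        fun i => ⟨Finset.Subset.refl _, by rw [Nat.card_Icc]; omega⟩, fun a₁ a₂ h₁ h₂ => ?_⟩⟩
      exfalso
      have := Finset.card_le_card (h₁ 0).1
      rw [(h₁ 0).2, Nat.card_Icc] at this
      omega



/-- The product Ramsey theorem: given `r ∈ ℕ` and natural numbers `k₁,…,k_l` and `p₁,…,p_l`,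
there exist `q₁,…,q_l` such that for each `r`-coloring of the tuples `(a₁,…,a_l)` with
`aᵢ ⊆ [qᵢ]` and `|aᵢ| = kᵢ`, there are `bᵢ ⊆ [qᵢ]` with `|bᵢ| = pᵢ` such that the set of
tuples `(a₁,…,a_l)` with `aᵢ ⊆ bᵢ` and `|aᵢ| = kᵢ` is monochromatic. -/
theorem product_ramsey (r l : ℕ) (k p : Fin l → ℕ) :
    ∃ q : Fin l → ℕ,
      ∀ χ : {a : Fin l → Finset ℕ //
          ∀ i, a i ⊆ Finset.Icc 1 (q i) ∧ (a i).card = k i} → Fin r,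
        ∃ b : Fin l → Finset ℕ,
          (∀ i, b i ⊆ Finset.Icc 1 (q i) ∧ (b i).card = p i) ∧
          ∀ a₁ a₂ : {a : Fin l → Finset ℕ //
              ∀ i, a i ⊆ Finset.Icc 1 (q i) ∧ (a i).card = k i},
            (∀ i, a₁.1 i ⊆ b i) → (∀ i, a₂.1 i ⊆ b i) → χ a₁ = χ a₂ := by
    classical
  rcases r with _ | r
  · refine ⟨p, fun χ => ⟨fun i => Finset.Icc 1 (p i),
      fun i => ⟨Finset.Subset.refl _, by rw [Nat.card_Icc]; omega⟩,
      fun a₁ a₂ _ _ => (χ a₁).elim0⟩⟩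
  · obtain ⟨q, hq⟩ := product_ramsey_aux (Fin (r + 1)) l k p
    refine ⟨q, fun χ => ?_⟩
    obtain ⟨b, hb, hmono⟩ := hq (fun a =>
      if h : ∀ i, a i ⊆ Finset.Icc 1 (q i) ∧ (a i).card = k i then χ ⟨a, h⟩ else 0)
    refine ⟨b, hb, fun a₁ a₂ h₁ h₂ => ?_⟩
    have e₁ : (if h : ∀ i, a₁.1 i ⊆ Finset.Icc 1 (q i) ∧ (a₁.1 i).card = k i then
        χ ⟨a₁.1, h⟩ else 0) = χ a₁ := dif_pos a₁.2
    have e₂ : (if h : ∀ i, a₂.1 i ⊆ Finset.Icc 1 (q i) ∧ (a₂.1 i).card = k i then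
        χ ⟨a₂.1, h⟩ else 0) = χ a₂ := dif_pos a₂.2
    rw [← e₁, ← e₂]
    exact hmono a₁.1 a₂.1 (fun i => ⟨h₁ i, (a₁.2 i).2⟩) (fun i => ⟨h₂ i, (a₂.2 i).2⟩)
end

section
/- For each k,l∈ℕ and r∈ℕ there exists m∈ℕ such that for each r-coloring of the set of all functions from [m] to [−k,0]={−k,…,0}, there is a function g: [m] → [−k,l] with image containing [l]={1,…,l} such that the set { f∘g : f: [−k,l] → [−k,0], f restricted to [−k,0] is the identity } is monochromatic. (Hales–Jewett theorem.) -/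
/-- The Hales–Jewett theorem (in the formulation via functions into intervals of integers):
for each `k, l, r ∈ ℕ` there exists `m ∈ ℕ` such that for each `r`-coloring of the functions
`[m] → [−k,0]`, there is `g : [m] → [−k,l]` with image containing `[l]` such that the set
`{ f ∘ g : f : [−k,l] → [−k,0], f ↾ [−k,0] = id }` is monochromatic. -/
theorem hales_jewett_intervals (k l r : ℕ) :
    ∃ m : ℕ,
      ∀ χ : ((Set.Icc (1 : ℤ) (m : ℤ)) → (Set.Icc (-(k : ℤ)) (0 : ℤ))) → Fin r,
        ∃ g : (Set.Icc (1 : ℤ) (m : ℤ)) → (Set.Icc (-(k : ℤ)) (l : ℤ)),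
          (∀ j : ℤ, 1 ≤ j → j ≤ (l : ℤ) → ∃ i, ((g i : ℤ)) = j) ∧
          ∀ f₁ f₂ : (Set.Icc (-(k : ℤ)) (l : ℤ)) → (Set.Icc (-(k : ℤ)) (0 : ℤ)),
            (∀ x : Set.Icc (-(k : ℤ)) (l : ℤ), (x : ℤ) ≤ 0 → ((f₁ x : ℤ)) = (x : ℤ)) →
            (∀ x : Set.Icc (-(k : ℤ)) (l : ℤ), (x : ℤ) ≤ 0 → ((f₂ x : ℤ)) = (x : ℤ)) →
            χ (fun i => f₁ (g i)) = χ (fun i => f₂ (g i)) := by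
  classical
  set α := (Set.Icc (-(k : ℤ)) (0 : ℤ))
  set η := (Set.Icc (1 : ℤ) (l : ℤ))
  obtain ⟨n, hn⟩ := Combinatorics.Subspace.exists_mono_in_high_dimension_fin α (Fin r) η
  refine ⟨n, fun χ => ?_⟩
  -- equivalence between [1, n] and Fin n
  have e : (Set.Icc (1 : ℤ) (n : ℤ)) ≃ Fin n :=
    { toFun := fun i => ⟨(i.1 - 1).toNat, by
        have h1 := i.2.1; have h2 := i.2.2
        omega⟩
      invFun := fun j => ⟨(j : ℤ) + 1, by
        constructor <;> [omega; exact_mod_cast by omega]⟩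
      left_inv := fun i => by
        have h1 := i.2.1
        ext; simp; omega
      right_inv := fun j => by
        ext; simp }
  obtain ⟨L, c, hc⟩ := hn (fun v => χ fun i => v (e i))
  -- embeddings into [-k, l]
  let embα : α → (Set.Icc (-(k : ℤ)) (l : ℤ)) := fun a =>
    ⟨a.1, a.2.1, le_trans a.2.2 (by exact_mod_cast Nat.zero_le l)⟩
  let embη : η → (Set.Icc (-(k : ℤ)) (l : ℤ)) := fun x =>
    ⟨x.1, le_trans (by omega) x.2.1, x.2.2⟩
  refine ⟨fun i => (L.idxFun (e i)).elim embα embη, ?_, ?_⟩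
  · intro j hj1 hjl
    obtain ⟨i, hi⟩ := L.proper ⟨j, hj1, hjl⟩
    refine ⟨e.symm i, ?_⟩
    simp only [Equiv.apply_symm_apply, hi, Sum.elim_inr, embη]
  · intro f₁ f₂ h₁ h₂
    have key : ∀ (f : (Set.Icc (-(k : ℤ)) (l : ℤ)) → α),
        (∀ x : Set.Icc (-(k : ℤ)) (l : ℤ), (x : ℤ) ≤ 0 → ((f x : ℤ)) = (x : ℤ)) →
        χ (fun i => f ((L.idxFun (e i)).elim embα embη))
          = χ (fun i => (L (fun y => f (embη y))) (e i)) := by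
      intro f hf
      congr 1
      funext i
      rcases h : L.idxFun (e i) with a | y
      · have : (f (embα a) : ℤ) = (a : ℤ) := hf (embα a) a.2.2
        have : f (embα a) = a := Subtype.ext this
        simp [Combinatorics.Subspace.coe_apply, h, this]
      · simp [Combinatorics.Subspace.coe_apply, h]
    rw [key f₁ h₁, key f₂ h₂]
    exact (hc (fun y => f₁ (embη y))).trans (hc (fun y => f₂ (embη y))).symm
end

section
/- The functor ∂*: 𝒯 → 𝒯 is frank: for every ordered tree S and every ordered tree T', there exists an ordered tree T with ∂*T = T' and ∂*(hom(S,T)) = hom(∂*S, ∂*T). -/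
/-- An ordered tree, concretely presented: a finite set of finite sequences of natural
numbers containing the empty sequence (the root) and closed under prefixes. The tree order
is the prefix order, meets are longest common prefixes, and the linear order on the
immediate successors of a node is given by the numerical order of the next entry (inducing
the lexicographic order on all nodes). Every ordered tree is of this form up to
isomorphism. -/
def IsOTree (T : Finset (List ℕ)) : Prop :=
  [] ∈ T ∧ ∀ s ∈ T, ∀ t : List ℕ, t <+: s → t ∈ T

/-- The height of a tree: the maximum of `ht(v) = (length of v) + 1` over nodes `v`. -/
def treeHt (T : Finset (List ℕ)) : ℕ :=
  T.sup (fun v => v.length + 1)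

/-- The functor `∂*` on objects: the subtree of all nodes of height `< ht(T)`
(and `T` itself if `ht(T) = 1`). -/
def pstar (T : Finset (List ℕ)) : Finset (List ℕ) :=
  if treeHt T = 1 then T else T.filter (fun v => v.length + 1 < treeHt T)

/-- The longest common prefix of two sequences: the meet in the tree order. -/
def lcp : List ℕ → List ℕ → List ℕ
  | a :: as, b :: bs => if a = b then a :: lcp as bs else []
  | _, _ => []

/-- The lexicographic order `≤_T` on nodes: prefix, or lexicographically smaller at the
first difference. -/
def lexLE (v w : List ℕ) : Prop :=
  v = w ∨ List.Lex (· < ·) v w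

/-- `f` is a morphism of the category `𝒯` from `S` to `T` (for trees of unequal heights
there are no morphisms): a height preserving embedding, i.e. a map of `S` into `T` that is
injective on `S`, preserves the lexicographic orders, meets, and heights of nodes. -/
def IsTreeHom (S T : Finset (List ℕ)) (f : List ℕ → List ℕ) : Prop :=
  treeHt S = treeHt T ∧
  (∀ v ∈ S, f v ∈ T) ∧
  (∀ v ∈ S, ∀ w ∈ S, f v = f w → v = w) ∧
  (∀ v ∈ S, ∀ w ∈ S, lexLE v w → lexLE (f v) (f w)) ∧
  (∀ v ∈ S, ∀ w ∈ S, f (lcp v w) = lcp (f v) (f w)) ∧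
  (∀ v ∈ S, (f v).length = v.length)

/-!
Take for `T` the tree `T'` with children `0, …, M` attached to each node of maximal height,
where `M` bounds every entry of `S`. With `k = ht(S) - 2`, a morphism `f' : ∂*S → T'` extends to
`f v = f' (v.take k) ++ v.drop k`. Comparing two sequences (meet, lexicographic order, equality)
is decided by their first `k` entries unless these coincide, and then by the rest, which `f`
copies; this is why `f` inherits the morphism properties of `f'`. Apart from the case
`ht(S) = ht(T') = 1`, where `T = T'`, there is no morphism `∂*S → T'` unless
`ht(S) = ht(T') + 1`.
-/

lemma take_lcp (k : ℕ) (v w : List ℕ) : (lcp v w).take k = lcp (v.take k) (w.take k) := by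
  induction v generalizing k w with
  | nil => simp [lcp]
  | cons a v ih =>
    cases w with
    | nil => simp [lcp]
    | cons b w =>
      cases k with
      | zero => simp [lcp]
      | succ k => by_cases hab : a = b <;> simp [lcp, hab, ih]

lemma drop_lcp (k : ℕ) (v w : List ℕ) :
    (lcp v w).drop k = if v.take k = w.take k then lcp (v.drop k) (w.drop k) else [] := by
  induction v generalizing k w with
  | nil => cases w <;> cases k <;> simp [lcp]
  | cons a v ih =>
    cases w with
    | nil => cases k <;> simp [lcp]
    | cons b w =>
      cases k with
      | zero => simp
      | succ k => by_cases hab : a = b <;> simp [lcp, hab, ih]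

lemma lex_iff_take_or_drop (k : ℕ) (v w : List ℕ) :
    List.Lex (· < ·) v w ↔ List.Lex (· < ·) (v.take k) (w.take k) ∨
      v.take k = w.take k ∧ List.Lex (· < ·) (v.drop k) (w.drop k) := by
  induction k generalizing v w with
  | zero => simp [List.not_lex_nil]
  | succ k ih =>
    cases v with
    | nil => cases w <;> simp [List.not_lex_nil]
    | cons a v =>
      cases w with
      | nil => simp [List.not_lex_nil]
      | cons b w =>
        simp only [List.take_succ_cons, List.drop_succ_cons, List.cons_lex_cons_iff,
          List.cons.injEq]
        rw [ih v w]
        tauto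

def prefixMap (k : ℕ) (g : List ℕ → List ℕ) (v : List ℕ) : List ℕ :=
  g (v.take k) ++ v.drop k

section prefixMap

variable {k : ℕ} {g : List ℕ → List ℕ} {v w : List ℕ}

lemma prefixMap_of_length_le (h : v.length ≤ k) : prefixMap k g v = g v := by
  simp [prefixMap, List.take_of_length_le h, List.drop_of_length_le h]

lemma length_prefixMap (hv : (g (v.take k)).length = (v.take k).length) :
    (prefixMap k g v).length = v.length := by
  rw [prefixMap, List.length_append, hv, ← List.length_append, List.take_append_drop]

lemma take_prefixMap (hv : (g (v.take k)).length = (v.take k).length) :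
    (prefixMap k g v).take k = g (v.take k) := by
  have hlen : (g (v.take k)).length ≤ k := by simp [hv]
  rcases le_total k v.length with h | h
  · rw [prefixMap, List.take_append_of_le_length (by simp [hv, h]), List.take_of_length_le hlen]
  · rw [prefixMap, List.drop_of_length_le h, List.append_nil, List.take_of_length_le hlen]

lemma drop_prefixMap (hv : (g (v.take k)).length = (v.take k).length) :
    (prefixMap k g v).drop k = v.drop k := by
  rcases le_total k v.length with h | h
  · rw [prefixMap, List.drop_append, List.drop_of_length_le (by simp [hv]), hv,
      List.length_take_of_le h, Nat.sub_self, List.drop_zero, List.nil_append]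
  · rw [List.drop_of_length_le h, List.drop_of_length_le (length_prefixMap hv ▸ h)]

lemma eq_of_prefixMap_eq (hv : (g (v.take k)).length = (v.take k).length)
    (hw : (g (w.take k)).length = (w.take k).length)
    (hinj : g (v.take k) = g (w.take k) → v.take k = w.take k)
    (h : prefixMap k g v = prefixMap k g w) : v = w := by
  have htake := congrArg (List.take k) h
  have hdrop := congrArg (List.drop k) h
  rw [take_prefixMap hv, take_prefixMap hw] at htake
  rw [drop_prefixMap hv, drop_prefixMap hw] at hdrop
  rw [← List.take_append_drop k v, ← List.take_append_drop k w, hinj htake, hdrop]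

lemma lcp_prefixMap (hv : (g (v.take k)).length = (v.take k).length)
    (hw : (g (w.take k)).length = (w.take k).length)
    (hinj : g (v.take k) = g (w.take k) ↔ v.take k = w.take k)
    (hmeet : g (lcp (v.take k) (w.take k)) = lcp (g (v.take k)) (g (w.take k))) :
    prefixMap k g (lcp v w) = lcp (prefixMap k g v) (prefixMap k g w) := by
  rw [← List.take_append_drop k (lcp (prefixMap k g v) _), take_lcp, drop_lcp,
    take_prefixMap hv, take_prefixMap hw, drop_prefixMap hv, drop_prefixMap hw]
  simp only [hinj]
  rw [← hmeet, prefixMap, take_lcp, drop_lcp]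

lemma lexLE_prefixMap (hv : (g (v.take k)).length = (v.take k).length)
    (hw : (g (w.take k)).length = (w.take k).length)
    (hinj : g (v.take k) = g (w.take k) ↔ v.take k = w.take k)
    (hlex : lexLE (v.take k) (w.take k) → lexLE (g (v.take k)) (g (w.take k)))
    (h : lexLE v w) : lexLE (prefixMap k g v) (prefixMap k g w) := by
  rcases h with rfl | h
  · exact Or.inl rfl
  refine Or.inr ((lex_iff_take_or_drop k _ _).2 ?_)
  rw [take_prefixMap hv, take_prefixMap hw, drop_prefixMap hv, drop_prefixMap hw, hinj]
  rcases (lex_iff_take_or_drop k v w).1 h with hlt | heq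
  · refine Or.inl ((hlex (Or.inr hlt)).resolve_left fun he => ?_)
    exact lt_irrefl (v.take k) (hinj.1 he ▸ hlt)
  · exact Or.inr heq

end prefixMap

lemma length_add_one_le_treeHt {T : Finset (List ℕ)} {v : List ℕ} (hv : v ∈ T) :
    v.length + 1 ≤ treeHt T :=
  Finset.le_sup (f := fun v : List ℕ => v.length + 1) hv

lemma exists_length_add_one_eq_treeHt {T : Finset (List ℕ)} (hT : IsOTree T) :
    ∃ w ∈ T, w.length + 1 = treeHt T := by
  obtain ⟨w, hw, hsup⟩ := Finset.exists_mem_eq_sup T ⟨[], hT.1⟩ (fun v => v.length + 1)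
  exact ⟨w, hw, hsup.symm⟩

lemma one_le_treeHt {T : Finset (List ℕ)} (hT : IsOTree T) : 1 ≤ treeHt T :=
  length_add_one_le_treeHt hT.1

lemma mem_pstar {T : Finset (List ℕ)} (h : treeHt T ≠ 1) {v : List ℕ} :
    v ∈ pstar T ↔ v ∈ T ∧ v.length + 1 < treeHt T := by
  rw [pstar, if_neg h, Finset.mem_filter]

lemma treeHt_pstar {T : Finset (List ℕ)} (hT : IsOTree T) (h : 2 ≤ treeHt T) :
    treeHt (pstar T) = treeHt T - 1 := by
  have hne : treeHt T ≠ 1 := by omega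
  refine le_antisymm (Finset.sup_le fun v hv => ?_) ?_
  · have := ((mem_pstar hne).1 hv).2
    omega
  · obtain ⟨w, hw, hlen⟩ := exists_length_add_one_eq_treeHt hT
    have hmem : w.take (treeHt T - 2) ∈ pstar T :=
      (mem_pstar hne).2 ⟨hT.2 w hw _ (List.take_prefix _ _), by simp; omega⟩
    have := length_add_one_le_treeHt hmem
    simp only [List.length_take] at this
    omega

def extendTree (T' : Finset (List ℕ)) (M : ℕ) : Finset (List ℕ) :=
  T' ∪ (T'.filter fun w => w.length + 1 = treeHt T').biUnion
      fun w => (Finset.range (M + 1)).image fun i => w ++ [i]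

section extendTree

variable {T' : Finset (List ℕ)} {M : ℕ}

lemma mem_extendTree {v : List ℕ} :
    v ∈ extendTree T' M ↔
      v ∈ T' ∨ ∃ w ∈ T', w.length + 1 = treeHt T' ∧ ∃ i ≤ M, v = w ++ [i] := by
  simp only [extendTree, Finset.mem_union, Finset.mem_biUnion, Finset.mem_filter,
    Finset.mem_image, Finset.mem_range, Nat.lt_succ_iff, and_assoc]
  grind

lemma isOTree_extendTree (hT' : IsOTree T') : IsOTree (extendTree T' M) := by
  refine ⟨mem_extendTree.2 (Or.inl hT'.1), fun s hs t ht => ?_⟩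
  rcases mem_extendTree.1 hs with h | ⟨w, hw, hlen, i, hi, rfl⟩
  · exact mem_extendTree.2 (Or.inl (hT'.2 s h t ht))
  by_cases hl : t.length ≤ w.length
  · exact mem_extendTree.2
      (Or.inl (hT'.2 w hw t (List.prefix_of_prefix_length_le ht (List.prefix_append w [i]) hl)))
  · have : t = w ++ [i] := ht.eq_of_length (by have := ht.length_le; simp at this ⊢; omega)
    exact mem_extendTree.2 (Or.inr ⟨w, hw, hlen, i, hi, this⟩)

lemma treeHt_extendTree (hT' : IsOTree T') : treeHt (extendTree T' M) = treeHt T' + 1 := by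
  refine le_antisymm (Finset.sup_le fun v hv => ?_) ?_
  · rcases mem_extendTree.1 hv with h | ⟨w, hw, hlen, i, hi, rfl⟩
    · have := length_add_one_le_treeHt h; omega
    · simp only [List.length_append, List.length_singleton]; omega
  · obtain ⟨w, hw, hlen⟩ := exists_length_add_one_eq_treeHt hT'
    have := length_add_one_le_treeHt
      (mem_extendTree.2 (Or.inr ⟨w, hw, hlen, 0, Nat.zero_le M, rfl⟩))
    simp only [List.length_append, List.length_singleton] at this
    omega

lemma pstar_extendTree (hT' : IsOTree T') : pstar (extendTree T' M) = T' := by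
  have hht := treeHt_extendTree (M := M) hT'
  have := one_le_treeHt hT'
  ext v
  rw [mem_pstar (by omega), hht]
  constructor
  · rintro ⟨hv, hlt⟩
    rcases mem_extendTree.1 hv with h | ⟨w, hw, hlen, i, hi, rfl⟩
    · exact h
    · simp only [List.length_append, List.length_singleton] at hlt; omega
  · intro hv
    exact ⟨mem_extendTree.2 (Or.inl hv), by have := length_add_one_le_treeHt hv; omega⟩

end extendTree

lemma isTreeHom_prefixMap {S T' : Finset (List ℕ)} {f' : List ℕ → List ℕ} {k M : ℕ}
    (hS : IsOTree S) (hT' : IsOTree T') (hk : treeHt S = k + 2)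
    (hf' : IsTreeHom (pstar S) T' f') (hM : ∀ v ∈ S, ∀ a ∈ v, a ≤ M) :
    IsTreeHom S (extendTree T' M) (prefixMap k f') := by
  obtain ⟨hht, hmem, hinj, hlex, hmeet, hlen⟩ := hf'
  have hS1 : treeHt S ≠ 1 := by omega
  have hT'ht : treeHt T' = k + 1 := by rw [← hht, treeHt_pstar hS (by omega)]; omega
  have htake (v) (hv : v ∈ S) : v.take k ∈ pstar S :=
    (mem_pstar hS1).2 ⟨hS.2 v hv _ (List.take_prefix _ _), by simp; omega⟩
  have hlen_take (v) (hv : v ∈ S) : (f' (v.take k)).length = (v.take k).length :=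
    hlen _ (htake v hv)
  have hinj_take (v) (hv : v ∈ S) (w) (hw : w ∈ S) :
      f' (v.take k) = f' (w.take k) ↔ v.take k = w.take k :=
    ⟨hinj _ (htake v hv) _ (htake w hw), congrArg f'⟩
  refine ⟨by rw [treeHt_extendTree hT', hT'ht, hk], fun v hv => ?_,
    fun v hv w hw => eq_of_prefixMap_eq (hlen_take v hv) (hlen_take w hw) (hinj_take v hv w hw).1,
    fun v hv w hw => lexLE_prefixMap (hlen_take v hv) (hlen_take w hw) (hinj_take v hv w hw)
      (hlex _ (htake v hv) _ (htake w hw)),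
    fun v hv w hw => lcp_prefixMap (hlen_take v hv) (hlen_take w hw) (hinj_take v hv w hw)
      (hmeet _ (htake v hv) _ (htake w hw)),
    fun v hv => length_prefixMap (hlen_take v hv)⟩
  have hv_ht := length_add_one_le_treeHt hv
  rcases (show v.length ≤ k ∨ v.length = k + 1 by omega) with hshort | htop
  · rw [prefixMap_of_length_le hshort]
    exact mem_extendTree.2 (Or.inl (hmem v ((mem_pstar hS1).2 ⟨hv, by omega⟩)))
  · obtain ⟨a, ha⟩ := List.length_eq_one_iff.1 (show (v.drop k).length = 1 by simp; omega)
    refine mem_extendTree.2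
      (Or.inr ⟨f' (v.take k), hmem _ (htake v hv), ?_, a, hM v hv a ?_, by rw [prefixMap, ha]⟩)
    · rw [hlen_take v hv, hT'ht]; simp; omega
    · exact List.mem_of_mem_drop (ha ▸ List.mem_singleton_self a)

/-- The functor `∂* : 𝒯 → 𝒯` (which sends `T` to `T* = pstar T` and a morphism to its
restriction to `S*`) is frank: for every ordered tree `S` and every ordered tree `T'`
there exists an ordered tree `T` with `∂*T = T'` and `∂*(hom(S,T)) = hom(∂*S, ∂*T)`,
i.e. every morphism `f' : ∂*S → T'` is the restriction to `∂*S` of a morphism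
`f : S → T`. -/
theorem pstar_frank (S T' : Finset (List ℕ)) (hS : IsOTree S) (hT' : IsOTree T') :
    ∃ T : Finset (List ℕ), IsOTree T ∧ pstar T = T' ∧
      ∀ f' : List ℕ → List ℕ, IsTreeHom (pstar S) T' f' →
        ∃ f : List ℕ → List ℕ, IsTreeHom S T f ∧ ∀ v ∈ pstar S, f v = f' v := by
  by_cases h1 : treeHt S = 1 ∧ treeHt T' = 1
  · refine ⟨T', hT', by rw [pstar, if_pos h1.2], fun f' hf' => ⟨f', ?_, fun _ _ => rfl⟩⟩
    rwa [pstar, if_pos h1.1] at hf'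
  refine ⟨extendTree T' (S.sup List.sum), isOTree_extendTree hT', pstar_extendTree hT',
    fun f' hf' => ?_⟩
  obtain ⟨k, hk⟩ : ∃ k, treeHt S = k + 2 := by
    refine ⟨treeHt S - 2, ?_⟩
    by_contra hne
    have hS1 : treeHt S = 1 := by have := one_le_treeHt hS; omega
    have hht := hf'.1
    rw [pstar, if_pos hS1] at hht
    exact h1 ⟨hS1, by omega⟩
  refine ⟨prefixMap k f', isTreeHom_prefixMap hS hT' hk hf'
    fun v hv a ha => (List.le_sum_of_mem ha).trans (Finset.le_sup hv), fun v hv => ?_⟩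
  have := ((mem_pstar (by omega)).1 hv).2
  exact prefixMap_of_length_le (by omega)
end

section
/- The functor ∂_P: P → P fulfills (P) at every pair of objects; in particular at (k,1) and (l,2): for each r∈ℕ there exists an object (m,2) of P such that for each r-coloring χ of hom((k,1),(m,2)) there exists p∈hom((l,2),(m,2)) with χ(x∘p)=χ(x'∘p) whenever x,x'∈hom((k,1),(l,2)) satisfy ∂_P x = ∂_P x'. -/
/-- Morphisms of the category `P` from `(k₁,1)` to `(l,2)`: functions `x : [l] → [k₁]`
(normalized to take the value `0` off `[l]`) which are constant on three consecutive
intervals `[1,a]`, `[a+1,b−1]`, `[b,l]` for some `1 ≤ a < a+1 < b ≤ l`, with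
`x(1) = k₁` and `x(l) = k₁ − 1`. -/
def IsHomP12 (k₁ l : ℕ) (x : ℕ → ℕ) : Prop :=
  (∀ j, j = 0 ∨ l < j → x j = 0) ∧
  (∀ j, 1 ≤ j → j ≤ l → 1 ≤ x j ∧ x j ≤ k₁) ∧
  ∃ a b, 1 ≤ a ∧ a + 1 < b ∧ b ≤ l ∧
    (∀ i j, 1 ≤ i → i ≤ j → j ≤ a → x i = x j) ∧
    (∀ i j, a + 1 ≤ i → i ≤ j → j ≤ b - 1 → x i = x j) ∧
    (∀ i j, b ≤ i → i ≤ j → j ≤ l → x i = x j) ∧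
    x 1 = k₁ ∧ x l = k₁ - 1

/-- Morphisms of the category `P` from `(l,2)` to `(m,2)`: surjections `p : [m] → [l]`
(normalized to take the value `0` off `[m]`) with `p(i) ≤ p(i+1) ≤ p(i) + 1` for
`i ∈ [m−1]`. -/
def IsHomP22 (l m : ℕ) (p : ℕ → ℕ) : Prop :=
  (∀ j, j = 0 ∨ m < j → p j = 0) ∧
  (∀ j, 1 ≤ j → j ≤ m → 1 ≤ p j ∧ p j ≤ l) ∧
  (∀ i, 1 ≤ i → i ≤ l → ∃ j, 1 ≤ j ∧ j ≤ m ∧ p j = i) ∧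
  (∀ i, 1 ≤ i → i + 1 ≤ m → p i ≤ p (i + 1) ∧ p (i + 1) ≤ p i + 1)

def stepFn (l k d : ℕ) : ℕ → ℕ :=
  fun j => if 1 ≤ j ∧ j ≤ l then (if j ≤ d then k else k - 1) else 0

lemma stepFn_isHom {k m : ℕ} (s : ℕ) (hk : 2 ≤ k) (hm : 3 ≤ m)
    (hs1 : 1 ≤ s) (hs2 : s ≤ m - 1) : IsHomP12 k m (stepFn m k s) := by
  refine ⟨?_, ?_, min s (m-2), min s (m-2) + 2, by omega, by omega, by omega,
    ?_, ?_, ?_, ?_, ?_⟩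
  · intro j hj; simp only [stepFn]; rw [if_neg (by omega)]
  · intro j h1 h2; simp only [stepFn]; rw [if_pos ⟨h1, h2⟩]; split <;> omega
  · intro i j hi hij hj
    simp only [stepFn]
    rw [if_pos (show 1 ≤ i ∧ i ≤ m by omega), if_pos (show 1 ≤ j ∧ j ≤ m by omega),
      if_pos (show i ≤ s by omega), if_pos (show j ≤ s by omega)]
  · intro i j hi hij hj
    have : i = j := by omega
    rw [this]
  · intro i j hi hij hj
    simp only [stepFn]
    rw [if_pos (show 1 ≤ i ∧ i ≤ m by omega), if_pos (show 1 ≤ j ∧ j ≤ m by omega),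
      if_neg (show ¬ i ≤ s by omega), if_neg (show ¬ j ≤ s by omega)]
  · simp only [stepFn]
    rw [if_pos (show 1 ≤ 1 ∧ 1 ≤ m by omega), if_pos (show 1 ≤ s by omega)]
  · simp only [stepFn]
    rw [if_pos (show 1 ≤ m ∧ m ≤ m by omega), if_neg (show ¬ m ≤ s by omega)]

lemma classify {k l : ℕ} {x : ℕ → ℕ} (hk : 2 ≤ k) (h : IsHomP12 k l x) :
    (∃ d, 1 ≤ d ∧ d < l ∧ x = stepFn l k d) ∨ (∃ j, 1 ≤ j ∧ j ≤ l ∧ x j + 2 ≤ k) := by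
  obtain ⟨hz, hbd, a, b, ha, hab, hb, hc1, hc2, hc3, hx1, hxl⟩ := h
  by_cases hv : x (a+1) + 2 ≤ k
  · exact Or.inr ⟨a+1, by omega, by omega, hv⟩
  · left
    have hvk : x (a+1) ≤ k := (hbd (a+1) (by omega) (by omega)).2
    by_cases hvk' : x (a+1) = k
    · refine ⟨b-1, by omega, by omega, ?_⟩
      funext j
      by_cases hjm : 1 ≤ j ∧ j ≤ l
      · simp only [stepFn, if_pos hjm]
        by_cases hjd : j ≤ b - 1
        · rw [if_pos hjd]
          by_cases hja : j ≤ a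
          · have e := hc1 1 j le_rfl hjm.1 hja; omega
          · have e := hc2 (a+1) j le_rfl (by omega) (by omega); omega
        · rw [if_neg hjd]
          have e := hc3 j l (by omega) hjm.2 le_rfl; omega
      · simp only [stepFn, if_neg hjm]
        exact hz j (by omega)
    · have hva : x (a+1) = k - 1 := by omega
      refine ⟨a, by omega, by omega, ?_⟩
      funext j
      by_cases hjm : 1 ≤ j ∧ j ≤ l
      · simp only [stepFn, if_pos hjm]
        by_cases hjd : j ≤ a
        · rw [if_pos hjd]
          have e := hc1 1 j le_rfl hjm.1 hjd; omega
        · rw [if_neg hjd]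
          by_cases hjb : j ≤ b - 1
          · have e := hc2 (a+1) j le_rfl (by omega) hjb; omega
          · have e := hc3 j l (by omega) hjm.2 le_rfl; omega
      · simp only [stepFn, if_neg hjm]
        exact hz j (by omega)

lemma eq_of_small {k l : ℕ} {x₁ x₂ : ℕ → ℕ} (hk : 2 ≤ k)
    (h1 : IsHomP12 k l x₁) (h2 : IsHomP12 k l x₂)
    (hmin : ∀ j, min (x₁ j) (k - 1) = min (x₂ j) (k - 1))
    (hs : ∃ j, 1 ≤ j ∧ j ≤ l ∧ x₁ j + 2 ≤ k) : x₁ = x₂ := by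
  obtain ⟨hz₁, hbd₁, a₁, b₁, ha₁, hab₁, hb₁, hc1₁, hc2₁, hc3₁, hx1₁, hxl₁⟩ := h1
  obtain ⟨hz₂, hbd₂, a₂, b₂, ha₂, hab₂, hb₂, hc1₂, hc2₂, hc3₂, hx1₂, hxl₂⟩ := h2
  obtain ⟨j₀, hj₀1, hj₀l, hj₀s⟩ := hs
  -- locating small values of x₁ in the middle interval of x₁:
  have loc1 : ∀ j, 1 ≤ j → j ≤ l → x₁ j + 2 ≤ k → a₁ + 1 ≤ j ∧ j + 1 ≤ b₁ := by
    intro j hj1 hjl hsm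
    rcases Nat.lt_or_ge a₁ j with h | h
    · rcases Nat.lt_or_ge j b₁ with h' | h'
      · exact ⟨by omega, by omega⟩
      · have e := hc3₁ j l h' hjl le_rfl; omega
    · have e := hc1₁ 1 j le_rfl hj1 h; omega
  have loc2 : ∀ j, 1 ≤ j → j ≤ l → x₂ j + 2 ≤ k → a₂ + 1 ≤ j ∧ j + 1 ≤ b₂ := by
    intro j hj1 hjl hsm
    rcases Nat.lt_or_ge a₂ j with h | h
    · rcases Nat.lt_or_ge j b₂ with h' | h'
      · exact ⟨by omega, by omega⟩
      · have e := hc3₂ j l h' hjl le_rfl; omega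
    · have e := hc1₂ 1 j le_rfl hj1 h; omega
  -- transfer smallness via hmin
  have tr12 : ∀ j, x₁ j + 2 ≤ k → x₂ j = x₁ j := by
    intro j hsm; have := hmin j; omega
  have tr21 : ∀ j, x₂ j + 2 ≤ k → x₁ j = x₂ j := by
    intro j hsm; have := hmin j; omega
  -- the small value sits in the middle interval of x₁
  have hj₀mid := loc1 j₀ hj₀1 hj₀l hj₀s
  -- x₁ is small on its whole middle interval
  have sm1 : ∀ j, a₁ + 1 ≤ j → j + 1 ≤ b₁ → x₁ j + 2 ≤ k := by
    intro j hja hjb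
    rcases le_or_gt j j₀ with h | h
    · have e := hc2₁ j j₀ hja h (by omega); omega
    · have e := hc2₁ j₀ j hj₀mid.1 (by omega) (by omega); omega
  have sm2a : x₂ (a₁+1) + 2 ≤ k := by
    have := tr12 (a₁+1) (sm1 (a₁+1) le_rfl (by omega)); have := sm1 (a₁+1) le_rfl (by omega); omega
  have sm2b : x₂ (b₁-1) + 2 ≤ k := by
    have := tr12 (b₁-1) (sm1 (b₁-1) (by omega) (by omega))
    have := sm1 (b₁-1) (by omega) (by omega); omega
  have hA := loc2 (a₁+1) (by omega) (by omega) sm2a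
  have hB := loc2 (b₁-1) (by omega) (by omega) sm2b
  -- so a₂ ≤ a₁ and b₁ ≤ b₂; now the symmetric direction
  have sm2 : ∀ j, a₂ + 1 ≤ j → j + 1 ≤ b₂ → x₂ j + 2 ≤ k := by
    intro j hja hjb
    rcases le_or_gt j (a₁+1) with h | h
    · have e := hc2₂ j (a₁+1) hja h (by omega); omega
    · have e := hc2₂ (a₁+1) j hA.1 (by omega) (by omega); omega
  have sm1a : x₁ (a₂+1) + 2 ≤ k := by
    have h' := sm2 (a₂+1) le_rfl (by omega)
    have := tr21 (a₂+1) h'; omega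
  have sm1b : x₁ (b₂-1) + 2 ≤ k := by
    have h' := sm2 (b₂-1) (by omega) (by omega)
    have := tr21 (b₂-1) h'; omega
  have hA' := loc1 (a₂+1) (by omega) (by omega) sm1a
  have hB' := loc1 (b₂-1) (by omega) (by omega) sm1b
  have haa : a₁ = a₂ := by omega
  have hbb : b₁ = b₂ := by omega
  subst haa hbb
  -- now prove pointwise equality
  funext j
  by_cases hjm : 1 ≤ j ∧ j ≤ l
  · rcases le_or_gt j a₁ with h | h
    · have e1 := hc1₁ 1 j le_rfl hjm.1 h
      have e2 := hc1₂ 1 j le_rfl hjm.1 h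
      omega
    · rcases Nat.lt_or_ge j b₁ with h' | h'
      · have e1 := hc2₁ (a₁+1) j le_rfl (by omega) (by omega)
        have e2 := hc2₂ (a₁+1) j le_rfl (by omega) (by omega)
        have := tr12 (a₁+1) (sm1 (a₁+1) le_rfl (by omega))
        omega
      · have e1 := hc3₁ j l h' hjm.2 le_rfl
        have e2 := hc3₂ j l h' hjm.2 le_rfl
        omega
  · have := hz₁ j (by omega); have := hz₂ j (by omega); omega

lemma keyLem {k l : ℕ} {x₁ x₂ : ℕ → ℕ} (hk : 2 ≤ k)
    (h1 : IsHomP12 k l x₁) (h2 : IsHomP12 k l x₂)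
    (hmin : ∀ j, min (x₁ j) (k - 1) = min (x₂ j) (k - 1)) :
    x₁ = x₂ ∨ ∃ d₁ d₂, 1 ≤ d₁ ∧ d₁ < l ∧ 1 ≤ d₂ ∧ d₂ < l ∧
      x₁ = stepFn l k d₁ ∧ x₂ = stepFn l k d₂ := by
  rcases classify hk h1 with hs1 | hs1
  · rcases classify hk h2 with hs2 | hs2
    · obtain ⟨d₁, hd₁, hd₁', he₁⟩ := hs1
      obtain ⟨d₂, hd₂, hd₂', he₂⟩ := hs2
      exact Or.inr ⟨d₁, d₂, hd₁, hd₁', hd₂, hd₂', he₁, he₂⟩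
    · exact Or.inl ((eq_of_small hk h2 h1 (fun j => (hmin j).symm) hs2).symm)
  · exact Or.inl (eq_of_small hk h1 h2 hmin hs1)

lemma card_filter_lt_oemb {S : Finset ℕ} {n : ℕ} (h : S.card = n) (i : Fin n) :
    (S.filter (· < S.orderEmbOfFin h i)).card = (i : ℕ) := by
  have he : S.filter (· < S.orderEmbOfFin h i)
      = (Finset.Iio i).image (fun t => S.orderEmbOfFin h t) := by
    ext s
    simp only [Finset.mem_filter, Finset.mem_image, Finset.mem_Iio]
    constructor
    · rintro ⟨hsS, hlt⟩
      have hr : s ∈ Set.range (S.orderEmbOfFin h) := by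
        rw [Finset.range_orderEmbOfFin]; exact hsS
      obtain ⟨t, rfl⟩ := hr
      exact ⟨t, (OrderEmbedding.lt_iff_lt _).mp hlt, rfl⟩
    · rintro ⟨t, hti, rfl⟩
      exact ⟨Finset.orderEmbOfFin_mem _ _ _, (OrderEmbedding.lt_iff_lt _).mpr hti⟩
  rw [he, Finset.card_image_of_injective _ (S.orderEmbOfFin h).injective, Fin.card_Iio]

/-- The functor `∂_P : P → P` fulfills (P) at the pair `(k,1)`, `(l,2)` (the only
nontrivial case of fulfilling (P) at every pair of objects): for each `r ∈ ℕ` there exists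
an object `(m,2)` such that for each `r`-coloring `χ` of `hom((k,1),(m,2))` there exists
`p ∈ hom((l,2),(m,2))` with `χ(x∘p) = χ(x'∘p)` whenever `x, x' ∈ hom((k,1),(l,2))` satisfy
`∂_P x = ∂_P x'`, i.e. `min(x, k−1) = min(x', k−1)`.  (Composition in `P` is reversed
function composition: `p · x = x ∘ p`.) -/
theorem Pdel_fulfillsP (k l r : ℕ) (hk : 2 ≤ k) (hl : 1 ≤ l) :
    ∃ m : ℕ, 1 ≤ m ∧
      ∀ χ : {x : ℕ → ℕ // IsHomP12 k m x} → Fin r,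
        ∃ p : ℕ → ℕ, IsHomP22 l m p ∧
          ∀ y₁ y₂ : {x : ℕ → ℕ // IsHomP12 k m x},
            (∃ x₁ x₂ : ℕ → ℕ, IsHomP12 k l x₁ ∧ IsHomP12 k l x₂ ∧
              (∀ j, min (x₁ j) (k - 1) = min (x₂ j) (k - 1)) ∧
              y₁.1 = x₁ ∘ p ∧ y₂.1 = x₂ ∘ p) →
            χ y₁ = χ y₂ := by
  refine ⟨r * l + 3, by omega, ?_⟩
  set m := r * l + 3 with hm
  have hm3 : 3 ≤ m := by omega
  intro χ
  have hdef : ∀ s : ℕ, 1 ≤ s → s ≤ m - 1 → IsHomP12 k m (stepFn m k s) :=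
    fun s h1 h2 => stepFn_isHom s hk hm3 h1 h2
  rcases Nat.eq_zero_or_pos r with hr0 | hr
  · have := (χ ⟨stepFn m k 1, hdef 1 le_rfl (by omega)⟩).isLt
    omega
  set g : ℕ → Fin r :=
    fun s => if hs : 1 ≤ s ∧ s ≤ m - 1 then χ ⟨stepFn m k s, hdef s hs.1 hs.2⟩ else ⟨0, hr⟩
    with hg
  obtain ⟨c, -, hc⟩ := Finset.exists_le_card_fiber_of_mul_le_card_of_maps_to
    (s := Finset.Icc 1 (m-1)) (t := (Finset.univ : Finset (Fin r))) (f := g) (n := l)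
    (fun a _ => Finset.mem_univ _) ⟨⟨0, hr⟩, Finset.mem_univ _⟩
    (by simp only [Finset.card_univ, Fintype.card_fin, Nat.card_Icc]; omega)
  obtain ⟨S, hSsub, hScard⟩ :=
    Finset.exists_subset_card_eq (show l - 1 ≤ _ from le_trans (by omega) hc)
  set f := S.orderEmbOfFin hScard with hf
  have hfS : ∀ i, f i ∈ S := fun i => Finset.orderEmbOfFin_mem _ _ _
  have hfIcc : ∀ i, 1 ≤ f i ∧ f i ≤ m - 1 := by
    intro i
    have h' := hSsub (hfS i)
    simp only [Finset.mem_filter, Finset.mem_Icc] at h'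
    exact h'.1
  have hSicc : ∀ s ∈ S, 1 ≤ s ∧ s ≤ m - 1 := by
    intro s hs
    have h' := hSsub hs
    simp only [Finset.mem_filter, Finset.mem_Icc] at h'
    exact h'.1
  have hfc : ∀ i, g (f i) = c := by
    intro i
    have h' := hSsub (hfS i)
    simp only [Finset.mem_filter] at h'
    exact h'.2
  set p : ℕ → ℕ := fun j => if 1 ≤ j ∧ j ≤ m then 1 + (S.filter (· < j)).card else 0 with hp
  have hcount : ∀ i : Fin (l - 1), (S.filter (· < f i)).card = (i : ℕ) :=
    fun i => card_filter_lt_oemb hScard i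
  -- the bridge: p j ≤ i + 1 ↔ j ≤ f i
  have hbridge : ∀ (i : Fin (l - 1)) (j : ℕ), 1 ≤ j → j ≤ m →
      (p j ≤ (i : ℕ) + 1 ↔ j ≤ f i) := by
    intro i j hj1 hjm
    simp only [hp]
    rw [if_pos (And.intro hj1 hjm)]
    constructor
    · intro hle
      by_contra hgt
      push_neg at hgt
      have hsub : insert (f i) (S.filter (· < f i)) ⊆ S.filter (· < j) := by
        intro s hs
        rcases Finset.mem_insert.mp hs with rfl | hs'
        · exact Finset.mem_filter.mpr ⟨hfS _, hgt⟩
        · have h' := Finset.mem_filter.mp hs'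
          exact Finset.mem_filter.mpr ⟨h'.1, by omega⟩
      have hcard := Finset.card_le_card hsub
      rw [Finset.card_insert_of_notMem (by simp), hcount i] at hcard
      omega
    · intro hle
      have hsub : S.filter (· < j) ⊆ S.filter (· < f i) := by
        intro s hs
        have h' := Finset.mem_filter.mp hs
        exact Finset.mem_filter.mpr ⟨h'.1, by omega⟩
      have hcard := Finset.card_le_card hsub
      rw [hcount i] at hcard
      omega
  have hpbd : ∀ j, 1 ≤ j → j ≤ m → 1 ≤ p j ∧ p j ≤ l := by
    intro j h1 h2
    simp only [hp]
    rw [if_pos (And.intro h1 h2)]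
    have hcle : (S.filter (· < j)).card ≤ S.card :=
      Finset.card_le_card (Finset.filter_subset _ _)
    rw [hScard] at hcle
    omega
  have hpsurj : IsHomP22 l m p := by
    refine ⟨?_, hpbd, ?_, ?_⟩
    · intro j hj; simp only [hp]; rw [if_neg (by omega)]
    · intro i h1 h2
      rcases Nat.lt_or_ge i l with hil | hil
      · obtain ⟨i', hi'⟩ : ∃ i' : Fin (l - 1), (i' : ℕ) = i - 1 := ⟨⟨i - 1, by omega⟩, rfl⟩
        have hfm := hfIcc i'
        refine ⟨f i', hfm.1, by omega, ?_⟩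
        simp only [hp, if_pos (show 1 ≤ f i' ∧ f i' ≤ m by omega)]
        rw [hcount i']
        omega
      · refine ⟨m, by omega, le_rfl, ?_⟩
        simp only [hp, if_pos (show 1 ≤ m ∧ m ≤ m by omega)]
        have hall : S.filter (· < m) = S := by
          apply Finset.filter_true_of_mem
          intro s hs
          have := hSicc s hs
          omega
        rw [hall, hScard]
        omega
    · intro i h1 h2
      have hsub1 : S.filter (· < i) ⊆ S.filter (· < i + 1) := by
        intro s hs
        have h' := Finset.mem_filter.mp hs
        exact Finset.mem_filter.mpr ⟨h'.1, by omega⟩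
      have hsub2 : S.filter (· < i + 1) ⊆ insert i (S.filter (· < i)) := by
        intro s hs
        have h' := Finset.mem_filter.mp hs
        rcases Nat.lt_or_ge s i with h'' | h''
        · exact Finset.mem_insert.mpr (Or.inr (Finset.mem_filter.mpr ⟨h'.1, h''⟩))
        · exact Finset.mem_insert.mpr (Or.inl (by omega))
      have hcc1 := Finset.card_le_card hsub1
      have hcc2 := le_trans (Finset.card_le_card hsub2) (Finset.card_insert_le _ _)
      constructor
      · simp only [hp, if_pos (show 1 ≤ i ∧ i ≤ m by omega),
          if_pos (show 1 ≤ i + 1 ∧ i + 1 ≤ m by omega)]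
        omega
      · simp only [hp, if_pos (show 1 ≤ i ∧ i ≤ m by omega),
          if_pos (show 1 ≤ i + 1 ∧ i + 1 ≤ m by omega)]
        omega
  have hcomp : ∀ i : Fin (l - 1),
      stepFn l k ((i : ℕ) + 1) ∘ p = stepFn m k (f i) := by
    intro i
    funext j
    simp only [Function.comp_apply, stepFn]
    by_cases hj : 1 ≤ j ∧ j ≤ m
    · have hpj := hpbd j hj.1 hj.2
      rw [if_pos hpj, if_pos hj]
      have hb := hbridge i j hj.1 hj.2
      by_cases hd : p j ≤ (i : ℕ) + 1
      · rw [if_pos hd, if_pos (hb.mp hd)]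
      · rw [if_neg hd, if_neg (fun h' => hd (hb.mpr h'))]
    · have hpj0 : p j = 0 := by simp only [hp]; rw [if_neg hj]
      rw [hpj0, if_neg (by omega), if_neg hj]
  have hmono : ∀ i : Fin (l - 1), ∀ (H : IsHomP12 k m (stepFn m k (f i))),
      χ ⟨stepFn m k (f i), H⟩ = c := by
    intro i H
    have h' := hfc i
    simp only [hg] at h'
    rw [dif_pos (hfIcc i)] at h'
    exact h'
  refine ⟨p, hpsurj, ?_⟩
  rintro y₁ y₂ ⟨x₁, x₂, h1, h2, hminh, hy1, hy2⟩
  rcases keyLem hk h1 h2 hminh with heq | ⟨d₁, d₂, hd₁, hd₁', hd₂, hd₂', hx₁, hx₂⟩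
  · have : y₁ = y₂ := Subtype.ext (by rw [hy1, hy2, heq])
    rw [this]
  · obtain ⟨i₁, hi₁⟩ : ∃ i : Fin (l - 1), (i : ℕ) + 1 = d₁ := ⟨⟨d₁ - 1, by omega⟩, by
      show d₁ - 1 + 1 = d₁; omega⟩
    obtain ⟨i₂, hi₂⟩ : ∃ i : Fin (l - 1), (i : ℕ) + 1 = d₂ := ⟨⟨d₂ - 1, by omega⟩, by
      show d₂ - 1 + 1 = d₂; omega⟩
    have e₁ : y₁ = ⟨stepFn m k (f i₁), hdef _ (hfIcc i₁).1 (hfIcc i₁).2⟩ :=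
      Subtype.ext (by rw [hy1, hx₁, ← hi₁, hcomp i₁])
    have e₂ : y₂ = ⟨stepFn m k (f i₂), hdef _ (hfIcc i₂).1 (hfIcc i₂).2⟩ :=
      Subtype.ext (by rw [hy2, hx₂, ← hi₂, hcomp i₂])
    rw [e₁, e₂, hmono i₁ _, hmono i₂ _]
end
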